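/- arXiv:1906.10319 — 3 statements merged into one kernel-verified Lean document; each statement's English description precedes it below -/
import Mathlib

section
/- Let f: L2(0,1) → ℝ∪{+∞} be symmetric. Then there exists a unique function 𝔣: P₂(ℝ) → ℝ∪{+∞} such that f(X) = 𝔣(law of X) for all X ∈ L2(0,1), and for this 𝔣: (a) f is proper if and only if 𝔣 is proper (not identically +∞); (b) f is lower semicontinuous with respect to the L2 norm if and only if 𝔣 is lower semicontinuous with respect to W₂, i.e., liminf_n 𝔣(μ_n) ≥ 𝔣(μ) whenever W₂(μ_n,μ) → 0; (c) f is convex if and only if for all μ, μ′ ∈ P₂(ℝ), every coupling π ∈ Π(μ,μ′), every α ∈ [0,1], and every pair (X,X′) ∈ L2(0,1)² whose joint law is π, 𝔣(law of αX + (1−α)X′) ≤ α·𝔣(μ) + (1−α)·𝔣(μ′). -/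
open MeasureTheory ProbabilityTheory Filter
open scoped ENNReal NNReal

noncomputable section

/-- Lebesgue measure restricted to the interval `(0,1)`. -/
def unitMeasure : Measure ℝ := volume.restrict (Set.Ioo (0:ℝ) 1)

/-- The Hilbert space `L2(0,1)`. -/
abbrev L2 : Type := Lp ℝ 2 unitMeasure

/-- The law (pushforward of Lebesgue measure on `(0,1)`) of `X ∈ L2(0,1)`. -/
def lawOf (X : L2) : Measure ℝ := Measure.map (fun t => X t) unitMeasure

/-- The joint law of a pair of elements of `L2(0,1)`. -/
def lawOf2 (X G : L2) : Measure (ℝ × ℝ) :=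
  Measure.map (fun t => (X t, G t)) unitMeasure

/-- Membership in the Wasserstein space `P₂(ℝ)`. -/
def MemP2 (μ : Measure ℝ) : Prop :=
  IsProbabilityMeasure μ ∧ Integrable (fun x : ℝ => x ^ 2) μ

/-- Membership in the Wasserstein space `P₂(ℝ²)`. -/
def MemP2Prod (π : Measure (ℝ × ℝ)) : Prop :=
  IsProbabilityMeasure π ∧ Integrable (fun q : ℝ × ℝ => q.1 ^ 2 + q.2 ^ 2) π

/-- `π` is a coupling of `μ` and `ν`. -/
def IsCoupling (π : Measure (ℝ × ℝ)) (μ ν : Measure ℝ) : Prop :=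
  π.fst = μ ∧ π.snd = ν

/-- Squared Wasserstein-2 distance on `P₂(ℝ)`. -/
def W2sq (μ ν : Measure ℝ) : ℝ :=
  sInf {r : ℝ | ∃ π : Measure (ℝ × ℝ), IsCoupling π μ ν ∧ r = ∫ q, (q.1 - q.2) ^ 2 ∂π}

/-- The Wasserstein-2 distance on `P₂(ℝ)`. -/
def W2 (μ ν : Measure ℝ) : ℝ := Real.sqrt (W2sq μ ν)

/-- Squared Wasserstein-2 distance on `P₂(ℝ²)` (Euclidean cost). -/
def W2sqProd (μ ν : Measure (ℝ × ℝ)) : ℝ :=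
  sInf {r : ℝ | ∃ π : Measure ((ℝ × ℝ) × (ℝ × ℝ)), π.fst = μ ∧ π.snd = ν ∧
    r = ∫ q, ((q.1.1 - q.2.1) ^ 2 + (q.1.2 - q.2.2) ^ 2) ∂π}

/-- The Wasserstein-2 distance on `P₂(ℝ²)`. -/
def W2Prod (μ ν : Measure (ℝ × ℝ)) : ℝ := Real.sqrt (W2sqProd μ ν)

/-- Convexity of an `ℝ ∪ {+∞}`-valued function. -/
def ConvexE {E : Type*} [AddCommMonoid E] [Module ℝ E] (f : E → EReal) : Prop :=
  ∀ x y : E, ∀ a b : ℝ, 0 ≤ a → 0 ≤ b → a + b = 1 →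
    f (a • x + b • y) ≤ (a : EReal) * f x + (b : EReal) * f y

/-- Objective of the scalar proximal problem. -/
def obj1 (ρ : ℝ → EReal) (y x : ℝ) : EReal :=
  (((1:ℝ)/2 * (y - x) ^ 2 : ℝ) : EReal) + ρ x

/-- `x` is the unique minimizer of `z ↦ ½(y−z)² + ρ(z)`. -/
def IsProx1 (ρ : ℝ → EReal) (y x : ℝ) : Prop :=
  (∀ z : ℝ, obj1 ρ y x ≤ obj1 ρ y z) ∧ ∀ z : ℝ, obj1 ρ y z ≤ obj1 ρ y x → z = x

/-- Objective of the proximal problem on `ℝ^p` (Euclidean norm). -/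
def objPi {p : ℕ} (f : (Fin p → ℝ) → EReal) (y x : Fin p → ℝ) : EReal :=
  (((1:ℝ)/2 * ∑ i, (y i - x i) ^ 2 : ℝ) : EReal) + f x

/-- `x` is the unique minimizer of `z ↦ ½‖y−z‖² + f(z)` on `ℝ^p`. -/
def IsProxPi {p : ℕ} (f : (Fin p → ℝ) → EReal) (y x : Fin p → ℝ) : Prop :=
  (∀ z, objPi f y x ≤ objPi f y z) ∧ ∀ z, objPi f y z ≤ objPi f y x → z = x

/-- Objective of the proximal problem on `L2(0,1)`. -/
def objL2 (f : L2 → EReal) (Y X : L2) : EReal :=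
  (((1:ℝ)/2 * ∫ t, (Y t - X t) ^ 2 ∂unitMeasure : ℝ) : EReal) + f X

/-- `P` is the unique minimizer of `X ↦ ½E[(Y−X)²] + f(X)` on `L2(0,1)`. -/
def IsProxL2 (f : L2 → EReal) (Y P : L2) : Prop :=
  (∀ X, objL2 f Y P ≤ objL2 f Y X) ∧ ∀ X, objL2 f Y X ≤ objL2 f Y P → X = P

/-- Permutation-symmetry of a function on `ℝ^p`. -/
def SymmPi {p : ℕ} (f : (Fin p → ℝ) → EReal) : Prop :=
  ∀ (σ : Equiv.Perm (Fin p)) (x : Fin p → ℝ), f (x ∘ σ) = f x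

/-- Symmetry (law-invariance) of a function on `L2(0,1)`. -/
def SymmL2 (f : L2 → EReal) : Prop :=
  ∀ X X' : L2, lawOf X = lawOf X' → f X = f X'

/-- `G` belongs to the subdifferential of `f` at `X`. -/
def InSubdiff (f : L2 → EReal) (X G : L2) : Prop :=
  ∀ X' : L2, f X + ((∫ t, G t * (X' t - X t) ∂unitMeasure : ℝ) : EReal) ≤ f X'

/-- Joint cyclic monotonicity of a set of measures on `ℝ²`. -/
def JointCycMono (K : Set (Measure (ℝ × ℝ))) : Prop :=
  ∀ (n : ℕ) (π : Fin n → Measure (ℝ × ℝ)), (∀ j, π j ∈ K) →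
    ∀ X G : Fin n → L2, (∀ j, lawOf2 (X j) (G j) = π j) →
      ∀ σ : Equiv.Perm (Fin n),
        ∑ j, ∫ t, X j t * G (σ j) t ∂unitMeasure ≤
          ∑ j, ∫ t, X j t * G j t ∂unitMeasure

/-- The standard Gaussian measure `N(0, I_p)` on `ℝ^p`. -/
def stdGaussPi (p : ℕ) : Measure (Fin p → ℝ) := Measure.pi fun _ => gaussianReal 0 1

/-- Convolution `μ * N(0, τ²)`. -/
def gaussConv (μ : Measure ℝ) (τ : ℝ) : Measure ℝ :=
  Measure.map (fun q : ℝ × ℝ => q.1 + q.2) (μ.prod (gaussianReal 0 (Real.toNNReal (τ ^ 2))))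

/-- Empirical distribution of the coordinates of a vector in `ℝ^p`. -/
def empDist {p : ℕ} (θ : Fin p → ℝ) : Measure ℝ :=
  ((p : ℝ≥0∞))⁻¹ • ∑ j : Fin p, Measure.dirac (θ j)

/-- Empirical joint distribution of the coordinate pairs of two vectors in `ℝ^p`. -/
def empPair {p : ℕ} (a b : Fin p → ℝ) : Measure (ℝ × ℝ) :=
  ((p : ℝ≥0∞))⁻¹ • ∑ j : Fin p, Measure.dirac (a j, b j)

/-- Non-decreasing and 1-Lipschitz (the class `PR₁`). -/
def IsPR1 (η : ℝ → ℝ) : Prop :=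
  Monotone η ∧ ∀ y y' : ℝ, |η y - η y'| ≤ |y - y'|

/-!
Law invariance makes `𝔣 μ := f X` (any `X` with law `μ`) well defined, and every `μ ∈ P₂(ℝ)` is
the law of its quantile function `F_μ⁻¹ ∈ L2(0,1)`; this gives existence, uniqueness and (a).
Convexity transfers because the joint law of `(X, X')` is a coupling of the two laws.

For lower semicontinuity, the point is that the quantile coupling is optimal for the quadratic
cost. Since `((y - x)⁺)²` is the area of `[x, y)²`, the cost of a coupling `π` of `μ` and `ν` is
an integral over `(s, t)` of the crossing probabilities `π {x ≤ s ⊓ t, s ⊔ t < y}` (and their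
mirror images). Each of these is at least `F_μ (s ⊓ t) - F_ν (s ⊔ t)`, whose positive part is
the crossing probability of the quantile coupling. Hence `‖F_μ⁻¹ - F_ν⁻¹‖ ≤ W₂(μ, ν)`, while `W₂(law X, law Y) ≤ ‖X - Y‖`
always, so `W₂`-convergence of laws and `L2`-convergence of representatives match up.
-/

instance : IsProbabilityMeasure unitMeasure :=
  ⟨by simp [unitMeasure, Real.volume_Ioo]⟩

lemma unitMeasure_apply (s : Set ℝ) : unitMeasure s = volume (s ∩ Set.Ioo 0 1) :=
  Measure.restrict_apply' measurableSet_Ioo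

lemma unitMeasure_Iic {c : ℝ} (hc : c ≤ 1) :
    unitMeasure (Set.Iic c) = ENNReal.ofReal c := by
  rw [unitMeasure_apply]
  apply le_antisymm
  · calc volume (Set.Iic c ∩ Set.Ioo 0 1) ≤ volume (Set.Ioc 0 c) :=
          measure_mono fun t ht => ⟨ht.2.1, ht.1⟩
      _ = ENNReal.ofReal c := by rw [Real.volume_Ioc, sub_zero]
  · calc ENNReal.ofReal c = volume (Set.Ioo 0 c) := by rw [Real.volume_Ioo, sub_zero]
      _ ≤ volume (Set.Iic c ∩ Set.Ioo 0 1) :=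
          measure_mono fun t ht => ⟨ht.2.le, ht.1, ht.2.trans_le hc⟩

namespace L2

lemma aemeasurable_coeFn (X : L2) : AEMeasurable (fun t => X t) unitMeasure :=
  (Lp.aestronglyMeasurable X).aemeasurable

instance (X : L2) : IsProbabilityMeasure (lawOf X) :=
  Measure.isProbabilityMeasure_map X.aemeasurable_coeFn

lemma memP2_lawOf (X : L2) : MemP2 (lawOf X) := by
  refine ⟨inferInstance, ?_⟩
  rw [lawOf, integrable_map_measure (by fun_prop) X.aemeasurable_coeFn]
  exact (memLp_two_iff_integrable_sq (Lp.aestronglyMeasurable X)).mp (Lp.memLp X)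

lemma isCoupling_lawOf2 (X Y : L2) : IsCoupling (lawOf2 X Y) (lawOf X) (lawOf Y) :=
  ⟨Measure.fst_map_prodMk₀ Y.aemeasurable_coeFn, Measure.snd_map_prodMk₀ X.aemeasurable_coeFn⟩

lemma norm_sq (X : L2) : ‖X‖ ^ 2 = ∫ t, X t ^ 2 ∂unitMeasure := by
  rw [← real_inner_self_eq_norm_sq, MeasureTheory.L2.inner_def]
  simp [sq]

lemma norm_sub_sq (X Y : L2) : ‖X - Y‖ ^ 2 = ∫ t, (X t - Y t) ^ 2 ∂unitMeasure := by
  rw [norm_sq]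
  refine integral_congr_ae ?_
  filter_upwards [Lp.coeFn_sub X Y] with t ht
  rw [ht, Pi.sub_apply]

lemma integral_sq_sub_lawOf2 (X Y : L2) :
    ∫ z, (z.1 - z.2) ^ 2 ∂(lawOf2 X Y) = ∫ t, (X t - Y t) ^ 2 ∂unitMeasure :=
  integral_map (X.aemeasurable_coeFn.prodMk Y.aemeasurable_coeFn) (by fun_prop)

end L2

def quantile (μ : Measure ℝ) (t : ℝ) : ℝ :=
  if t ∈ Set.Ioo (0:ℝ) 1 then sInf {x | t ≤ cdf μ x} else 0

section Quantile

variable {μ : Measure ℝ}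

lemma quantile_le_iff [IsProbabilityMeasure μ] {t : ℝ} (ht : t ∈ Set.Ioo (0:ℝ) 1) (x : ℝ) :
    quantile μ t ≤ x ↔ t ≤ cdf μ x := by
  set S := {x | t ≤ cdf μ x}
  have hne : S.Nonempty := ((tendsto_cdf_atTop μ).eventually (eventually_ge_nhds ht.2)).exists
  have hbdd : BddBelow S := by
    obtain ⟨x₀, hx₀⟩ := ((tendsto_cdf_atBot μ).eventually (eventually_lt_nhds ht.1)).exists
    exact ⟨x₀, fun y hy => le_of_not_gt fun hyx => (hy.trans ((cdf μ).mono hyx.le)).not_gt hx₀⟩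
  have hmem : sInf S ∈ S := by
    refine ge_of_tendsto (((cdf μ).right_continuous _).mono Set.Ioi_subset_Ici_self)
      (eventually_nhdsWithin_of_forall fun z hz => ?_)
    obtain ⟨y, hy, hyz⟩ := (csInf_lt_iff hbdd hne).mp hz
    exact hy.trans ((cdf μ).mono hyz.le)
  rw [quantile, if_pos ht]
  exact ⟨fun h => hmem.trans ((cdf μ).mono h), fun h => csInf_le hbdd h⟩

lemma lt_quantile_iff [IsProbabilityMeasure μ] {t : ℝ} (ht : t ∈ Set.Ioo (0:ℝ) 1) (x : ℝ) :
    x < quantile μ t ↔ cdf μ x < t := by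
  rw [← not_le, ← not_le, quantile_le_iff ht]

@[fun_prop]
lemma measurable_quantile [IsProbabilityMeasure μ] : Measurable (quantile μ) := by
  refine measurable_of_Iic fun x => ?_
  have : quantile μ ⁻¹' Set.Iic x = (Set.Ioo 0 1).ite (Set.Iic (cdf μ x)) {_t | 0 ≤ x} := by
    ext t
    by_cases ht : t ∈ Set.Ioo (0:ℝ) 1
    · simp [Set.ite, ht, quantile_le_iff ht]
    · simp [Set.ite, ht, quantile]
  rw [this]
  exact measurableSet_Ioo.ite measurableSet_Iic (MeasurableSet.const _)

lemma map_quantile [IsProbabilityMeasure μ] : unitMeasure.map (quantile μ) = μ := by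
  refine Measure.ext_of_Iic _ _ fun x => ?_
  rw [Measure.map_apply measurable_quantile measurableSet_Iic, ← ofReal_cdf,
    ← unitMeasure_Iic (cdf_le_one μ x), unitMeasure_apply, unitMeasure_apply]
  congr 1
  ext t
  exact and_congr_left fun ht => quantile_le_iff ht x

lemma memLp_quantile (hμ : MemP2 μ) : MemLp (quantile μ) 2 unitMeasure := by
  have := hμ.1
  have hid : MemLp id 2 μ := (memLp_two_iff_integrable_sq aestronglyMeasurable_id).mpr hμ.2
  rw [← map_quantile (μ := μ)] at hid
  exact (memLp_map_measure_iff aestronglyMeasurable_id measurable_quantile.aemeasurable).mp hid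

def quantileLp (μ : Measure ℝ) (hμ : MemP2 μ) : L2 := (memLp_quantile hμ).toLp _

lemma coeFn_quantileLp (hμ : MemP2 μ) : (quantileLp μ hμ : ℝ → ℝ) =ᵐ[unitMeasure] quantile μ :=
  MemLp.coeFn_toLp _

lemma lawOf_quantileLp (hμ : MemP2 μ) : lawOf (quantileLp μ hμ) = μ := by
  have := hμ.1
  rw [lawOf, Measure.map_congr (coeFn_quantileLp hμ), map_quantile]

end Quantile

lemma ofReal_sq_sub (x y : ℝ) :
    ENNReal.ofReal ((x - y) ^ 2) = ENNReal.ofReal (y - x) ^ 2 + ENNReal.ofReal (x - y) ^ 2 := by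
  rcases le_total x y with h | h
  · rw [ENNReal.ofReal_of_nonpos (sub_nonpos.2 h), ← ENNReal.ofReal_pow (sub_nonneg.2 h),
      sub_sq_comm]
    simp
  · rw [ENNReal.ofReal_of_nonpos (sub_nonpos.2 h), ← ENNReal.ofReal_pow (sub_nonneg.2 h)]
    simp

lemma lintegral_ofReal_sub_sq {Ω : Type*} [MeasurableSpace Ω] (P : Measure Ω) [SFinite P]
    {X Y : Ω → ℝ} (hX : Measurable X) (hY : Measurable Y) :
    ∫⁻ ω, ENNReal.ofReal (Y ω - X ω) ^ 2 ∂P =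
      ∫⁻ p : ℝ × ℝ, P {ω | X ω ≤ p.1 ⊓ p.2 ∧ p.1 ⊔ p.2 < Y ω} := by
  set s := {q : Ω × (ℝ × ℝ) | X q.1 ≤ q.2.1 ⊓ q.2.2 ∧ q.2.1 ⊔ q.2.2 < Y q.1}
  have hs : MeasurableSet s :=
    (measurableSet_le (hX.comp measurable_fst) (by fun_prop)).inter
      (measurableSet_lt (by fun_prop) (hY.comp measurable_fst))
  have hsq (ω : Ω) : ENNReal.ofReal (Y ω - X ω) ^ 2 = volume (Prod.mk ω ⁻¹' s) := by
    have : Prod.mk ω ⁻¹' s = Set.Ico (X ω) (Y ω) ×ˢ Set.Ico (X ω) (Y ω) := by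
      ext p
      simp only [s, le_inf_iff, sup_lt_iff, Set.preimage_ofPred_eq, Set.mem_ofPred_eq, Set.mem_prod,
        Set.mem_Ico]
      tauto
    rw [this, Measure.volume_eq_prod, Measure.prod_prod, Real.volume_Ico, sq]
  simp_rw [hsq]
  rw [← Measure.prod_apply hs, Measure.prod_apply_symm hs]
  rfl

lemma lintegral_ofReal_sq_sub {Ω : Type*} [MeasurableSpace Ω] (P : Measure Ω) [SFinite P]
    {X Y : Ω → ℝ} (hX : Measurable X) (hY : Measurable Y) :
    ∫⁻ ω, ENNReal.ofReal ((X ω - Y ω) ^ 2) ∂P =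
      (∫⁻ p : ℝ × ℝ, P {ω | X ω ≤ p.1 ⊓ p.2 ∧ p.1 ⊔ p.2 < Y ω}) +
        ∫⁻ p : ℝ × ℝ, P {ω | Y ω ≤ p.1 ⊓ p.2 ∧ p.1 ⊔ p.2 < X ω} := by
  simp_rw [ofReal_sq_sub]
  rw [lintegral_add_left (by fun_prop), lintegral_ofReal_sub_sq P hX hY,
    lintegral_ofReal_sub_sq P hY hX]

lemma measure_sub_measure_le_crossing {Ω : Type*} [MeasurableSpace Ω] (P : Measure Ω)
    (X Y : Ω → ℝ) (a b : ℝ) :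
    P {ω | X ω ≤ a} - P {ω | Y ω ≤ b} ≤ P {ω | X ω ≤ a ∧ b < Y ω} :=
  tsub_le_iff_right.mpr <| (measure_mono fun ω hω => (lt_or_ge b (Y ω)).imp (⟨hω, ·⟩) id).trans
    (measure_union_le _ _)

section Coupling

variable {μ ν : Measure ℝ} {π : Measure (ℝ × ℝ)}

lemma unitMeasure_quantile_crossing_le [IsProbabilityMeasure μ] [IsProbabilityMeasure ν]
    (a b : ℝ) :
    unitMeasure {r | quantile μ r ≤ a ∧ b < quantile ν r} ≤ μ (Set.Iic a) - ν (Set.Iic b) := by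
  rw [unitMeasure_apply, ← ofReal_cdf, ← ofReal_cdf, ← ENNReal.ofReal_sub _ (cdf_nonneg ν b),
    ← Real.volume_Ioc]
  exact measure_mono fun r ⟨⟨h₁, h₂⟩, hr⟩ =>
    ⟨(lt_quantile_iff hr b).mp h₂, (quantile_le_iff hr a).mp h₁⟩

lemma IsCoupling.isProbabilityMeasure [IsProbabilityMeasure μ] (hc : IsCoupling π μ ν) :
    IsProbabilityMeasure π :=
  ⟨by rw [← Measure.fst_univ, hc.1, measure_univ]⟩

lemma IsCoupling.measure_fst_Iic (hc : IsCoupling π μ ν) (a : ℝ) :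
    π {z | z.1 ≤ a} = μ (Set.Iic a) := by
  rw [← hc.1, Measure.fst_apply measurableSet_Iic]
  rfl

lemma IsCoupling.measure_snd_Iic (hc : IsCoupling π μ ν) (a : ℝ) :
    π {z | z.2 ≤ a} = ν (Set.Iic a) := by
  rw [← hc.2, Measure.snd_apply measurableSet_Iic]
  rfl

theorem lintegral_quantile_sq_sub_le [IsProbabilityMeasure μ] [IsProbabilityMeasure ν]
    (hc : IsCoupling π μ ν) :
    ∫⁻ r, ENNReal.ofReal ((quantile μ r - quantile ν r) ^ 2) ∂unitMeasure ≤
      ∫⁻ z, ENNReal.ofReal ((z.1 - z.2) ^ 2) ∂π := by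
  have := hc.isProbabilityMeasure
  rw [lintegral_ofReal_sq_sub unitMeasure measurable_quantile measurable_quantile,
    lintegral_ofReal_sq_sub π measurable_fst measurable_snd]
  gcongr with p p
  · calc _ ≤ μ (Set.Iic _) - ν (Set.Iic _) := unitMeasure_quantile_crossing_le _ _
      _ ≤ _ := by
        rw [← hc.measure_fst_Iic, ← hc.measure_snd_Iic]
        exact measure_sub_measure_le_crossing π Prod.fst Prod.snd _ _
  · calc _ ≤ ν (Set.Iic _) - μ (Set.Iic _) := unitMeasure_quantile_crossing_le _ _
      _ ≤ _ := by
        rw [← hc.measure_fst_Iic, ← hc.measure_snd_Iic]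
        exact measure_sub_measure_le_crossing π Prod.snd Prod.fst _ _

end Coupling

section Wasserstein

variable {μ ν : Measure ℝ} {π : Measure (ℝ × ℝ)}

lemma MemP2.memLp_id (hμ : MemP2 μ) : MemLp id 2 μ :=
  (memLp_two_iff_integrable_sq aestronglyMeasurable_id).mpr hμ.2

lemma IsCoupling.memLp_fst (hc : IsCoupling π μ ν) (hμ : MemP2 μ) :
    MemLp (fun z : ℝ × ℝ => z.1) 2 π := by
  have hid := hμ.memLp_id
  rw [← hc.1, Measure.fst] at hid
  exact (memLp_map_measure_iff aestronglyMeasurable_id measurable_fst.aemeasurable).mp hid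

lemma IsCoupling.memLp_snd (hc : IsCoupling π μ ν) (hν : MemP2 ν) :
    MemLp (fun z : ℝ × ℝ => z.2) 2 π := by
  have hid := hν.memLp_id
  rw [← hc.2, Measure.snd] at hid
  exact (memLp_map_measure_iff aestronglyMeasurable_id measurable_snd.aemeasurable).mp hid

lemma integral_quantile_sq_sub_le (hμ : MemP2 μ) (hν : MemP2 ν) (hc : IsCoupling π μ ν) :
    ∫ r, (quantile μ r - quantile ν r) ^ 2 ∂unitMeasure ≤ ∫ z, (z.1 - z.2) ^ 2 ∂π := by
  have := hμ.1
  have := hν.1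
  have hcost : Integrable (fun z : ℝ × ℝ => (z.1 - z.2) ^ 2) π :=
    ((hc.memLp_fst hμ).sub (hc.memLp_snd hν)).integrable_sq
  rw [integral_eq_lintegral_of_nonneg_ae (ae_of_all _ fun _ => sq_nonneg _) (by fun_prop),
    integral_eq_lintegral_of_nonneg_ae (ae_of_all _ fun _ => sq_nonneg _) (by fun_prop)]
  exact ENNReal.toReal_mono hcost.lintegral_lt_top.ne (lintegral_quantile_sq_sub_le hc)

lemma integral_quantile_sq_sub_le_W2sq (hμ : MemP2 μ) (hν : MemP2 ν) :
    ∫ r, (quantile μ r - quantile ν r) ^ 2 ∂unitMeasure ≤ W2sq μ ν := by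
  have := hμ.1
  have := hν.1
  refine le_csInf ⟨_, μ.prod ν, ⟨Measure.fst_prod, Measure.snd_prod⟩, rfl⟩ ?_
  rintro _ ⟨π, hc, rfl⟩
  exact integral_quantile_sq_sub_le hμ hν hc

lemma norm_sub_quantileLp_le_W2 (hμ : MemP2 μ) (hν : MemP2 ν) :
    ‖quantileLp μ hμ - quantileLp ν hν‖ ≤ W2 μ ν := by
  refine Real.le_sqrt_of_sq_le ?_
  rw [L2.norm_sub_sq]
  calc ∫ t, (quantileLp μ hμ t - quantileLp ν hν t) ^ 2 ∂unitMeasure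
      = ∫ r, (quantile μ r - quantile ν r) ^ 2 ∂unitMeasure := by
        refine integral_congr_ae ?_
        filter_upwards [coeFn_quantileLp hμ, coeFn_quantileLp hν] with t h₁ h₂
        rw [h₁, h₂]
    _ ≤ W2sq μ ν := integral_quantile_sq_sub_le_W2sq hμ hν

lemma W2_lawOf_le_dist (X Y : L2) : W2 (lawOf X) (lawOf Y) ≤ dist X Y := by
  refine Real.sqrt_le_iff.mpr ⟨dist_nonneg, ?_⟩
  rw [dist_eq_norm, L2.norm_sub_sq, ← L2.integral_sq_sub_lawOf2]
  refine csInf_le ⟨0, ?_⟩ ⟨_, L2.isCoupling_lawOf2 X Y, rfl⟩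
  rintro _ ⟨π, -, rfl⟩
  exact integral_nonneg fun _ => sq_nonneg _

lemma tendsto_quantileLp {μs : ℕ → Measure ℝ} (hμ : MemP2 μ) (hμs : ∀ n, MemP2 (μs n))
    (hW : Tendsto (fun n => W2 (μs n) μ) atTop (nhds 0)) :
    Tendsto (fun n => quantileLp (μs n) (hμs n)) atTop (nhds (quantileLp μ hμ)) :=
  tendsto_iff_norm_sub_tendsto_zero.mpr <|
    squeeze_zero (fun _ => norm_nonneg _) (fun _ => norm_sub_quantileLp_le_W2 _ _) hW

lemma tendsto_W2_lawOf {u : ℕ → L2} {X : L2} (hu : Tendsto u atTop (nhds X)) :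
    Tendsto (fun n => W2 (lawOf (u n)) (lawOf X)) atTop (nhds 0) :=
  squeeze_zero (fun _ => Real.sqrt_nonneg _) (fun _ => W2_lawOf_le_dist _ _)
    (tendsto_iff_dist_tendsto_zero.mp hu)

end Wasserstein

theorem lowerSemicontinuous_iff_le_liminf_seq {α γ : Type*} [TopologicalSpace α]
    [FirstCountableTopology α] [CompleteLinearOrder γ] {f : α → γ} :
    LowerSemicontinuous f ↔
      ∀ (x : α) (u : ℕ → α), Tendsto u atTop (nhds x) → f x ≤ liminf (f ∘ u) atTop := by
  refine ⟨fun hf x u hu => (hf.le_liminf x).trans hu.liminf_le_liminf_comp, fun h x y hy => ?_⟩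
  by_contra hfreq
  obtain ⟨u, hu, hfu⟩ := exists_seq_forall_of_frequently (not_eventually.mp hfreq)
  exact hy.not_ge <| (h x u hu).trans <|
    liminf_le_of_frequently_le' (Frequently.of_forall fun n => not_lt.mp (hfu n))

def lawLift (f : L2 → EReal) (μ : Measure ℝ) : EReal :=
  ⨅ (X : L2) (_ : lawOf X = μ), f X

lemma SymmL2.lawLift_lawOf {f : L2 → EReal} (hf : SymmL2 f) (X : L2) :
    lawLift f (lawOf X) = f X :=
  le_antisymm (iInf₂_le (f := fun Y (_ : lawOf Y = lawOf X) => f Y) X rfl)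
    (le_iInf₂ fun Y hY => (hf X Y hY.symm).le)

theorem symmetric_function_correspondence_general (f : L2 → EReal)
    (hsymm : SymmL2 f) :
    ∃ F : Measure ℝ → EReal,
      -- F represents f
      (∀ X : L2, f X = F (lawOf X)) ∧
      -- F is unique (as a function on P₂(ℝ))
      (∀ F' : Measure ℝ → EReal, (∀ X : L2, f X = F' (lawOf X)) →
        ∀ μ : Measure ℝ, MemP2 μ → F' μ = F μ) ∧
      -- (a) properness transfers
      ((∃ X : L2, f X ≠ ⊤) ↔ ∃ μ : Measure ℝ, MemP2 μ ∧ F μ ≠ ⊤) ∧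
      -- (b) lower semicontinuity transfers
      (LowerSemicontinuous f ↔
        ∀ (μ : Measure ℝ) (μs : ℕ → Measure ℝ), MemP2 μ → (∀ n, MemP2 (μs n)) →
          Tendsto (fun n => W2 (μs n) μ) atTop (nhds 0) →
          F μ ≤ liminf (fun n => F (μs n)) atTop) ∧
      -- (c) convexity transfers
      (ConvexE f ↔
        ∀ μ μ' : Measure ℝ, MemP2 μ → MemP2 μ' →
          ∀ π : Measure (ℝ × ℝ), IsCoupling π μ μ' →
          ∀ α : ℝ, 0 ≤ α → α ≤ 1 →
          ∀ X X' : L2, lawOf2 X X' = π →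
            F (lawOf (α • X + (1 - α) • X'))
              ≤ (α : EReal) * F μ + ((1 - α : ℝ) : EReal) * F μ') := by
  have rep (X : L2) : f X = lawLift f (lawOf X) := (hsymm.lawLift_lawOf X).symm
  have rep_quantile {μ : Measure ℝ} (hμ : MemP2 μ) : lawLift f μ = f (quantileLp μ hμ) := by
    rw [rep, lawOf_quantileLp]
  refine ⟨lawLift f, rep, fun F' hF' μ hμ => ?_, ?_, ?_, ?_⟩
  · rw [rep_quantile hμ, hF', lawOf_quantileLp]
  · exact ⟨fun ⟨X, hX⟩ => ⟨lawOf X, L2.memP2_lawOf X, by rwa [← rep]⟩,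
      fun ⟨μ, hμ, hF⟩ => ⟨quantileLp μ hμ, by rwa [← rep_quantile]⟩⟩
  · rw [lowerSemicontinuous_iff_le_liminf_seq]
    refine ⟨fun h μ μs hμ hμs hW => ?_, fun h X u hu => ?_⟩
    · simp only [rep_quantile hμ, rep_quantile (hμs _)]
      exact h _ _ (tendsto_quantileLp hμ hμs hW)
    · have := h _ _ (L2.memP2_lawOf X) (fun n => L2.memP2_lawOf (u n)) (tendsto_W2_lawOf hu)
      simp only [← rep] at this
      exact this
  · refine ⟨?_, fun h X Y a b ha hb hab => ?_⟩
    · rintro hconv μ μ' - - π ⟨rfl, rfl⟩ α hα₀ hα₁ X X' rfl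
      rw [(L2.isCoupling_lawOf2 X X').1, (L2.isCoupling_lawOf2 X X').2, ← rep, ← rep, ← rep]
      exact hconv X X' α (1 - α) hα₀ (by linarith) (by ring)
    · obtain rfl : b = 1 - a := by linarith
      simpa only [← rep] using h _ _ (L2.memP2_lawOf X) (L2.memP2_lawOf Y) _
        (L2.isCoupling_lawOf2 X Y) a ha (by linarith) X Y rfl

/-- Proposition: symmetric functions on `L2(0,1)` correspond to
functions on Wasserstein space, and properness/lsc/convexity transfer. -/
theorem symmetric_function_correspondence (f : L2 → EReal)
    (hbot : ∀ X, f X ≠ ⊥) (hsymm : SymmL2 f) :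
    ∃ F : Measure ℝ → EReal,
      -- F represents f
      (∀ X : L2, f X = F (lawOf X)) ∧
      -- F is unique (as a function on P₂(ℝ))
      (∀ F' : Measure ℝ → EReal, (∀ X : L2, f X = F' (lawOf X)) →
        ∀ μ : Measure ℝ, MemP2 μ → F' μ = F μ) ∧
      -- (a) properness transfers
      ((∃ X : L2, f X ≠ ⊤) ↔ ∃ μ : Measure ℝ, MemP2 μ ∧ F μ ≠ ⊤) ∧
      -- (b) lower semicontinuity transfers
      (LowerSemicontinuous f ↔
        ∀ (μ : Measure ℝ) (μs : ℕ → Measure ℝ), MemP2 μ → (∀ n, MemP2 (μs n)) →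
          Tendsto (fun n => W2 (μs n) μ) atTop (nhds 0) →
          F μ ≤ liminf (fun n => F (μs n)) atTop) ∧
      -- (c) convexity transfers
      (ConvexE f ↔
        ∀ μ μ' : Measure ℝ, MemP2 μ → MemP2 μ' →
          ∀ π : Measure (ℝ × ℝ), IsCoupling π μ μ' →
          ∀ α : ℝ, 0 ≤ α → α ≤ 1 →
          ∀ X X' : L2, lawOf2 X X' = π →
            F (lawOf (α • X + (1 - α) • X'))
              ≤ (α : EReal) * F μ + ((1 - α : ℝ) : EReal) * F μ') :=
  symmetric_function_correspondence_general f hsymm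

end
end

section
/- Let f: L2(0,1) → ℝ∪{+∞} be symmetric, lower semicontinuous, proper, and convex. Then there exists a map 𝔄: P₂(ℝ) → PR₁ such that prox[f](Y) = 𝔄(law of Y)∘Y for every Y ∈ L2(0,1). In particular, for every Y ∈ L2(0,1), prox[f](Y) is measurable with respect to the σ-algebra generated by Y, and whenever Y and Y′ have the same law, the joint law of (Y, prox[f](Y)) equals the joint law of (Y′, prox[f](Y′)). -/
open MeasureTheory ProbabilityTheory Filter
open scoped ENNReal NNReal

noncomputable section

/-!
At a proximal point `P = prox[f](Y)` the subgradient inequality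
`f P + E[(Y - P)(Z - P)] ≤ f Z` holds. For a measure-preserving rearrangement `s` of `(0,1)`,
symmetry gives `f (P ∘ s) = f P`, so testing against `Z = P ∘ s` yields
`E[(Y - P)(P ∘ s - P)] ≤ 0`. Taking for `s` the swap of two short intervals `[a, a + h)` and
`[a + d, a + d + h)` and letting `h → 0` (Lebesgue differentiation, then Fubini along the
diagonals `u = t + d`) gives `(P t - P u)² ≤ (Y t - Y u)(P t - P u)` for almost every pair
`(t, u)`. This inequality then holds at every pair of points of the support of the joint law of
`(Y, P)`, so that support is the graph of a non-decreasing 1-Lipschitz map `η`, and `P = η ∘ Y`.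
If `P' = η' ∘ Y'` is the proximal point of some `Y'` with the law of `Y`, testing the subgradient
inequalities at `P` and `P'` against `η' ∘ Y` and `η ∘ Y'` and adding them gives
`E[(η - η')²(Y)] ≤ 0`, so `η` depends only on the law of `Y`.
-/

open Set
open scoped Topology RealInnerProductSpace

instance inst_s10 : IsProbabilityMeasure unitMeasure := ⟨by simp [unitMeasure]⟩

theorem ConvexE.toReal_add_inner_le {E : Type*} [NormedAddCommGroup E] [InnerProductSpace ℝ E]
    {g : E → EReal} (hg : ConvexE g) (hbot : ∀ x, g x ≠ ⊥) {y p : E}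
    (hmin : ∀ x, (((1:ℝ)/2 * ‖y - p‖ ^ 2 : ℝ) : EReal) + g p ≤
      (((1:ℝ)/2 * ‖y - x‖ ^ 2 : ℝ) : EReal) + g x)
    (hp : g p ≠ ⊤) {z : E} (hz : g z ≠ ⊤) :
    (g p).toReal + ⟪y - p, z - p⟫ ≤ (g z).toReal := by
  set a := (g p).toReal
  set b := (g z).toReal
  have hgp : g p = a := (EReal.coe_toReal hp (hbot p)).symm
  have hgz : g z = b := (EReal.coe_toReal hz (hbot z)).symm
  have step : ∀ τ ∈ Ioo (0:ℝ) 1, ⟪y - p, z - p⟫ ≤ τ / 2 * ‖z - p‖ ^ 2 + (b - a) := by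
    rintro τ ⟨hτ0, hτ1⟩
    have hconv : g ((1 - τ) • p + τ • z) ≤ (((1 - τ) * a + τ * b : ℝ) : EReal) := by
      have := hg p z (1 - τ) τ (by linarith) hτ0.le (by ring)
      rwa [hgp, hgz, ← EReal.coe_mul, ← EReal.coe_mul, ← EReal.coe_add] at this
    have hnorm : ‖y - ((1 - τ) • p + τ • z)‖ ^ 2 =
        ‖y - p‖ ^ 2 - 2 * τ * ⟪y - p, z - p⟫ + τ ^ 2 * ‖z - p‖ ^ 2 := by
      rw [show y - ((1 - τ) • p + τ • z) = (y - p) - τ • (z - p) by module, norm_sub_sq_real,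
        inner_smul_right, norm_smul, mul_pow, Real.norm_eq_abs, sq_abs]
      ring
    have key : (1:ℝ)/2 * ‖y - p‖ ^ 2 + a ≤
        1/2 * ‖y - ((1 - τ) • p + τ • z)‖ ^ 2 + ((1 - τ) * a + τ * b) := by
      have := (hmin _).trans (add_le_add le_rfl hconv)
      rw [hgp] at this
      exact_mod_cast this
    rw [hnorm] at key
    have : τ * ⟪y - p, z - p⟫ ≤ τ * (τ / 2 * ‖z - p‖ ^ 2 + (b - a)) := by linarith
    exact le_of_mul_le_mul_left this hτ0
  have hlim : Tendsto (fun τ : ℝ => τ / 2 * ‖z - p‖ ^ 2 + (b - a)) (𝓝[>] 0) (𝓝 (b - a)) := by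
    have : Continuous fun τ : ℝ => τ / 2 * ‖z - p‖ ^ 2 + (b - a) := by fun_prop
    simpa using (this.tendsto 0).mono_left nhdsWithin_le_nhds
  have := ge_of_tendsto hlim (Filter.mem_of_superset (Ioo_mem_nhdsGT one_pos) step)
  linarith

theorem MeasureTheory.L2.real_inner_eq_integral_mul {α : Type*} [MeasurableSpace α]
    {μ : Measure α} (X Z : Lp ℝ 2 μ) : ⟪X, Z⟫ = ∫ a, X a * Z a ∂μ := by
  simp [L2.inner_def, mul_comm]

lemma integral_sub_mul_sub_eq_inner (Y P Z : L2) :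
    ∫ t, (Y t - P t) * (Z t - P t) ∂unitMeasure = ⟪Y - P, Z - P⟫ := by
  rw [L2.real_inner_eq_integral_mul]
  refine integral_congr_ae ?_
  filter_upwards [Lp.coeFn_sub Y P, Lp.coeFn_sub Z P] with t h1 h2
  rw [h1, h2]; rfl

lemma integral_sub_sq_eq_norm_sq (Y X : L2) :
    ∫ t, (Y t - X t) ^ 2 ∂unitMeasure = ‖Y - X‖ ^ 2 := by
  rw [← real_inner_self_eq_norm_sq, ← integral_sub_mul_sub_eq_inner Y X Y]
  simp only [sq]

lemma objL2_eq (f : L2 → EReal) (Y X : L2) :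
    objL2 f Y X = (((1:ℝ)/2 * ‖Y - X‖ ^ 2 : ℝ) : EReal) + f X := by
  rw [objL2, integral_sub_sq_eq_norm_sq]

lemma measurable_pair_coe (X G : L2) : Measurable fun t => (X t, G t) :=
  (Lp.stronglyMeasurable X).measurable.prodMk (Lp.stronglyMeasurable G).measurable

instance (X : L2) : IsProbabilityMeasure (lawOf X) :=
  Measure.isProbabilityMeasure_map (Lp.stronglyMeasurable X).measurable.aemeasurable

instance (X G : L2) : IsProbabilityMeasure (lawOf2 X G) :=
  Measure.isProbabilityMeasure_map (measurable_pair_coe X G).aemeasurable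

lemma lawOf_compMeasurePreserving {s : ℝ → ℝ} (hs : MeasurePreserving s unitMeasure unitMeasure)
    (X : L2) : lawOf (Lp.compMeasurePreserving s hs X) = lawOf X := by
  rw [lawOf, lawOf, Measure.map_congr (Lp.coeFn_compMeasurePreserving X hs),
    ← Measure.map_map (Lp.stronglyMeasurable X).measurable hs.measurable, hs.map_eq]

lemma lawOf_eq_map_of_ae_eq_comp {X Y : L2} {g : ℝ → ℝ} (hg : Measurable g)
    (h : (fun t => X t) =ᵐ[unitMeasure] fun t => g (Y t)) : lawOf X = (lawOf Y).map g := by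
  rw [lawOf, lawOf, Measure.map_congr h, Measure.map_map hg (Lp.stronglyMeasurable Y).measurable]
  rfl

lemma lawOf2_eq_map_of_ae_eq_comp {X Y : L2} {g : ℝ → ℝ} (hg : Measurable g)
    (h : (fun t => X t) =ᵐ[unitMeasure] fun t => g (Y t)) :
    lawOf2 Y X = (lawOf Y).map fun y => (y, g y) := by
  have h' : (fun t => (Y t, X t)) =ᵐ[unitMeasure] fun t => (Y t, g (Y t)) :=
    h.mono fun t ht => congrArg (Prod.mk (Y t)) ht
  rw [lawOf2, lawOf, Measure.map_congr h',
    Measure.map_map (by fun_prop) (Lp.stronglyMeasurable Y).measurable]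
  rfl

lemma IsPR1.lipschitzWith {η : ℝ → ℝ} (hη : IsPR1 η) : LipschitzWith 1 η :=
  LipschitzWith.of_dist_le_mul fun y y' => by simpa [Real.dist_eq] using hη.2 y y'

lemma IsPR1.measurable {η : ℝ → ℝ} (hη : IsPR1 η) : Measurable η :=
  hη.lipschitzWith.continuous.measurable

lemma isPR1_id : IsPR1 id := ⟨monotone_id, fun _ _ => le_rfl⟩

lemma IsPR1.memLp_lawOf {η : ℝ → ℝ} (hη : IsPR1 η) (X : L2) : MemLp η 2 (lawOf X) := by
  have hid : MemLp id 2 (lawOf X) := (memLp_map_measure_iff aestronglyMeasurable_id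
    (Lp.stronglyMeasurable X).measurable.aemeasurable).2 (Lp.memLp X)
  refine ((memLp_const |η 0|).add hid.norm).of_le hη.measurable.aestronglyMeasurable
    (Eventually.of_forall fun y => ?_)
  have := hη.2 y 0
  rw [sub_zero] at this
  show ‖η y‖ ≤ ‖|η 0| + ‖y‖‖
  rw [Real.norm_eq_abs, Real.norm_eq_abs, Real.norm_eq_abs,
    abs_of_nonneg (by positivity : (0:ℝ) ≤ |η 0| + |y|)]
  linarith [abs_sub_abs_le_abs_sub (η y) (η 0)]

lemma IsPR1.memLp_comp {η : ℝ → ℝ} (hη : IsPR1 η) (X : L2) :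
    MemLp (fun t => η (X t)) 2 unitMeasure :=
  (memLp_map_measure_iff hη.measurable.aestronglyMeasurable
    (Lp.stronglyMeasurable X).measurable.aemeasurable).1 (hη.memLp_lawOf X)

theorem exists_isPR1_eqOn {S : Set (ℝ × ℝ)} (hS : S.Nonempty)
    (h : ∀ z ∈ S, ∀ w ∈ S, (z.2 - w.2) ^ 2 ≤ (z.1 - w.1) * (z.2 - w.2)) :
    ∃ η, IsPR1 η ∧ ∀ z ∈ S, η z.1 = z.2 := by
  have key : ∀ z ∈ S, ∀ w ∈ S, z.2 - w.2 ≤ max (z.1 - w.1) 0 := by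
    intro z hz w hw
    by_contra! hlt
    nlinarith [h z hz w hw, le_max_left (z.1 - w.1) 0, le_max_right (z.1 - w.1) 0]
  obtain ⟨w, hw⟩ := hS
  have : Nonempty S := ⟨⟨w, hw⟩⟩
  -- `η` is the supremum of the monotone 1-Lipschitz cones `φ z`, a McShane-type extension
  set φ : ℝ × ℝ → ℝ → ℝ := fun z y => z.2 - max (z.1 - y) 0
  have hbdd : ∀ y, BddAbove (range fun z : S => φ z y) := by
    refine fun y => ⟨w.2 + max (y - w.1) 0, ?_⟩
    rintro _ ⟨⟨z, hz⟩, rfl⟩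
    have := key z hz w hw
    simp only [φ, max_def] at this ⊢
    split_ifs at this ⊢ <;> linarith
  have hle : ∀ y, ∀ z ∈ S, φ z y ≤ ⨆ z : S, φ z y := fun y z hz => le_ciSup (hbdd y) ⟨z, hz⟩
  have hmono : ∀ z y y', y ≤ y' → φ z y ≤ φ z y' := by
    intro z y y' hyy'
    simp only [φ, max_def]
    split_ifs <;> linarith
  have hcone : ∀ z y y', φ z y ≤ φ z y' + |y - y'| := by
    intro z y y'
    simp only [φ, max_def]
    split_ifs <;> linarith [le_abs_self (y - y'), neg_abs_le (y - y')]
  have hlip : ∀ y y', (⨆ z : S, φ z y) ≤ (⨆ z : S, φ z y') + |y - y'| := fun y y' =>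
    ciSup_le fun ⟨z, hz⟩ => by linarith [hcone z y y', hle y' z hz]
  refine ⟨fun y => ⨆ z : S, φ z y, ⟨fun y y' hyy' => ?_, fun y y' => ?_⟩, fun z hz => ?_⟩
  · exact ciSup_le fun ⟨z, hz⟩ => (hmono z y y' hyy').trans (hle y' z hz)
  · exact abs_sub_le_iff.2 ⟨by linarith [hlip y y'], by linarith [hlip y' y, abs_sub_comm y y']⟩
  · refine le_antisymm (ciSup_le fun ⟨w, hw⟩ => ?_) ((hle z.1 z hz).trans' (by simp [φ]))
    show w.2 - max (w.1 - z.1) 0 ≤ z.2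
    linarith [key w hw z hz]

lemma MeasureTheory.Measure.prod_ne_zero_of_mem_support {α β : Type*} [TopologicalSpace α]
    [MeasurableSpace α] [TopologicalSpace β] [MeasurableSpace β] {μ : Measure α}
    {ν : Measure β} [SFinite ν] {x : α} {y : β} (hx : x ∈ μ.support) (hy : y ∈ ν.support)
    {V : Set (α × β)} (hV : IsOpen V) (hxy : (x, y) ∈ V) : μ.prod ν V ≠ 0 := by
  obtain ⟨U₁, U₂, hU₁, hU₂, hxU, hyU, hsub⟩ := isOpen_prod_iff.mp hV x y hxy
  have h₁ := (Measure.mem_support_iff_forall x).1 hx U₁ (hU₁.mem_nhds hxU)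
  have h₂ := (Measure.mem_support_iff_forall y).1 hy U₂ (hU₂.mem_nhds hyU)
  refine (lt_of_lt_of_le ?_ (measure_mono hsub)).ne'
  rw [Measure.prod_prod]
  exact ENNReal.mul_pos h₁.ne' h₂.ne'

lemma ae_nonpos_of_eventually_setIntegral_Icc_nonpos {g : ℝ → ℝ} (hg : LocallyIntegrable g)
    {S : Set ℝ} (h : ∀ x ∈ S, ∀ᶠ r in 𝓝[>] 0, ∫ t in Icc (x - r) (x + r), g t ≤ 0) :
    ∀ᵐ x, x ∈ S → g x ≤ 0 := by
  filter_upwards [IsUnifLocDoublingMeasure.ae_tendsto_average volume hg 1] with x hx hxS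
  have htend : Tendsto (fun r => ⨍ t in Icc (x - r) (x + r), g t) (𝓝[>] 0) (𝓝 (g x)) := by
    simpa [Real.closedBall_eq_Icc] using hx (fun _ => x) id tendsto_id
      (eventually_mem_nhdsWithin.mono fun r hr => by simpa using le_of_lt hr)
  refine le_of_tendsto htend ((h x hxS).mono fun r hr => ?_)
  rw [setAverage_eq, smul_eq_mul]
  exact mul_nonpos_of_nonneg_of_nonpos (by positivity) hr

lemma ae_prod_of_forall_ae_add {p : ℝ → ℝ → Prop} (hp : MeasurableSet {z : ℝ × ℝ | p z.1 z.2})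
    (h : ∀ d, ∀ᵐ t, p t (t + d)) : ∀ᵐ z ∂(volume.prod volume : Measure (ℝ × ℝ)), p z.1 z.2 := by
  have hshear := measurePreserving_prod_add_swap (volume : Measure ℝ) (volume : Measure ℝ)
  rw [← hshear.map_eq, ae_map_iff hshear.measurable.aemeasurable hp]
  exact (Measure.ae_prod_iff_ae_ae (p := fun z => p z.2 (z.2 + z.1))
    (hshear.measurable hp)).2 (Eventually.of_forall h)

def intervalSwap (a d h t : ℝ) : ℝ :=
  if t ∈ Ico a (a + h) then t + d else if t ∈ Ico (a + d) (a + h + d) then t - d else t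

section IntervalSwap

variable {a d h : ℝ}

lemma measurable_intervalSwap (a d h : ℝ) : Measurable (intervalSwap a d h) :=
  Measurable.ite measurableSet_Ico (measurable_add_const d) <|
    Measurable.ite measurableSet_Ico (measurable_sub_const d) measurable_id

lemma measurePreserving_add_const_restrict_Ico (a b c : ℝ) :
    MeasurePreserving (· + c) (volume.restrict (Ico a b))
      (volume.restrict (Ico (a + c) (b + c))) := by
  simpa using (measurePreserving_add_right volume c).restrict_preimage
    (measurableSet_Ico (a := a + c) (b := b + c))

lemma map_intervalSwap_restrict_left :
    (volume.restrict (Ico a (a + h))).map (intervalSwap a d h) =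
      volume.restrict (Ico (a + d) (a + h + d)) := by
  rw [Measure.map_congr (g := (· + d)), (measurePreserving_add_const_restrict_Ico _ _ d).map_eq]
  filter_upwards [ae_restrict_mem measurableSet_Ico] with t ht
  simp [intervalSwap, ht]

lemma map_intervalSwap_restrict_right (hhd : h ≤ d) :
    (volume.restrict (Ico (a + d) (a + h + d))).map (intervalSwap a d h) =
      volume.restrict (Ico a (a + h)) := by
  rw [Measure.map_congr (g := (· + -d)),
    (measurePreserving_add_const_restrict_Ico _ _ (-d)).map_eq]
  · simp
  filter_upwards [ae_restrict_mem measurableSet_Ico] with t ht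
  have : t ∉ Ico a (a + h) := fun h' => by linarith [h'.2, ht.1]
  simp [intervalSwap, ht, this, sub_eq_add_neg]

lemma unitMeasure_eq_add (ha : 0 < a) (hhd : h ≤ d) (hend : a + d + h ≤ 1) :
    unitMeasure = volume.restrict (Ico a (a + h)) + volume.restrict (Ico (a + d) (a + h + d)) +
      volume.restrict (Ioo 0 1 \ (Ico a (a + h) ∪ Ico (a + d) (a + h + d))) := by
  have hsub : Ico a (a + h) ∪ Ico (a + d) (a + h + d) ⊆ Ioo 0 1 :=
    union_subset (fun t ht => ⟨by linarith [ht.1], by linarith [ht.1, ht.2]⟩)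
      (fun t ht => ⟨by linarith [ht.1, ht.2], by linarith [ht.2]⟩)
  have hdisj : Disjoint (Ico a (a + h)) (Ico (a + d) (a + h + d)) :=
    disjoint_left.mpr fun t h1 h2 => by linarith [h1.2, h2.1]
  rw [unitMeasure, ← Measure.restrict_union hdisj measurableSet_Ico,
    ← Measure.restrict_union disjoint_sdiff_right
      (measurableSet_Ioo.diff (measurableSet_Ico.union measurableSet_Ico)),
    union_sdiff_cancel hsub]

lemma measurePreserving_intervalSwap (ha : 0 < a) (hhd : h ≤ d) (hend : a + d + h ≤ 1) :
    MeasurePreserving (intervalSwap a d h) unitMeasure unitMeasure := by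
  refine ⟨measurable_intervalSwap a d h, ?_⟩
  set C := Ioo 0 1 \ (Ico a (a + h) ∪ Ico (a + d) (a + h + d))
  have hC : (volume.restrict C).map (intervalSwap a d h) = volume.restrict C := by
    rw [Measure.map_congr (g := id), Measure.map_id]
    filter_upwards [ae_restrict_mem (measurableSet_Ioo.diff
      (measurableSet_Ico.union measurableSet_Ico))] with t ht
    simp only [intervalSwap, if_neg fun h' => ht.2 (Or.inl h'),
      if_neg fun h' => ht.2 (Or.inr h'), id]
  rw [unitMeasure_eq_add ha hhd hend, Measure.map_add _ _ (measurable_intervalSwap a d h),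
    Measure.map_add _ _ (measurable_intervalSwap a d h), map_intervalSwap_restrict_left,
    map_intervalSwap_restrict_right hhd, hC, add_comm (volume.restrict (Ico (a + d) _))]

lemma integral_unitMeasure_eq_setIntegral_add_shift (ha : 0 < a) (hhd : h ≤ d)
    (hend : a + d + h ≤ 1) {G : ℝ → ℝ} (hG : Integrable G unitMeasure)
    (hC : ∀ t ∈ Ioo 0 1 \ (Ico a (a + h) ∪ Ico (a + d) (a + h + d)), G t = 0) :
    ∫ t, G t ∂unitMeasure = ∫ t in Ico a (a + h), (G t + G (t + d)) := by
  have hshift := measurePreserving_add_const_restrict_Ico a (a + h) d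
  rw [unitMeasure_eq_add ha hhd hend] at hG ⊢
  have hGA := hG.mono_measure (Measure.le_add_right (Measure.le_add_right le_rfl))
  have hGB := hG.mono_measure (Measure.le_add_right (Measure.le_add_left le_rfl))
  rw [integral_add_measure (hG.mono_measure (Measure.le_add_right le_rfl))
      (hG.mono_measure (Measure.le_add_left le_rfl)),
    integral_add_measure hGA hGB, setIntegral_eq_zero_of_forall_eq_zero hC, add_zero,
    ← hshift.integral_comp (measurableEmbedding_addRight d) G]
  exact (integral_add hGA
    ((hshift.integrable_comp_emb (measurableEmbedding_addRight d)).mpr hGB)).symm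

end IntervalSwap

/-- `firmExcess y p t u ≤ 0` says that `p` is firmly nonexpansive in `y` between `t` and `u`. -/
def firmExcess (y p : ℝ → ℝ) (t u : ℝ) : ℝ := (p t - p u) ^ 2 - (y t - y u) * (p t - p u)

lemma firmExcess_comm (y p : ℝ → ℝ) (t u : ℝ) : firmExcess y p t u = firmExcess y p u t := by
  unfold firmExcess; ring

lemma memLp_indicator_Ioo (X : L2) : MemLp ((Ioo 0 1).indicator X) 2 volume :=
  (memLp_indicator_iff_restrict measurableSet_Ioo).mpr (Lp.memLp X)

structure IsSymmConvex (f : L2 → EReal) : Prop where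
  symm : SymmL2 f
  ne_bot : ∀ X, f X ≠ ⊥
  proper : ∃ X, f X ≠ ⊤
  convex : ConvexE f

namespace IsProxL2

variable {f : L2 → EReal} {Y P : L2}

lemma ne_top (hproper : ∃ X, f X ≠ ⊤) (hP : IsProxL2 f Y P) : f P ≠ ⊤ := by
  obtain ⟨X, hX⟩ := hproper
  intro htop
  have := hP.1 X
  rw [objL2, objL2, htop, EReal.coe_add_top, top_le_iff] at this
  exact EReal.add_ne_top (EReal.coe_ne_top _) hX this

lemma toReal_add_integral_le (hbot : ∀ X, f X ≠ ⊥) (hproper : ∃ X, f X ≠ ⊤)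
    (hconv : ConvexE f) (hP : IsProxL2 f Y P) {Z : L2} (hZ : f Z ≠ ⊤) :
    (f P).toReal + ∫ t, (Y t - P t) * (Z t - P t) ∂unitMeasure ≤ (f Z).toReal := by
  rw [integral_sub_mul_sub_eq_inner]
  refine hconv.toReal_add_inner_le hbot (fun X => ?_) (hP.ne_top hproper) hZ
  simpa only [objL2_eq] using hP.1 X

lemma integral_mul_comp_sub_nonpos (hf : IsSymmConvex f) (hP : IsProxL2 f Y P) {s : ℝ → ℝ}
    (hs : MeasurePreserving s unitMeasure unitMeasure) :
    ∫ t, (Y t - P t) * (P (s t) - P t) ∂unitMeasure ≤ 0 := by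
  set Z := Lp.compMeasurePreserving s hs P
  have hfZ : f Z = f P := hf.symm _ _ (lawOf_compMeasurePreserving hs P)
  have := hP.toReal_add_integral_le hf.ne_bot hf.proper hf.convex (hfZ ▸ hP.ne_top hf.proper)
  rw [hfZ, integral_congr_ae (g := fun t => (Y t - P t) * (P (s t) - P t))] at this
  · linarith
  filter_upwards [Lp.coeFn_compMeasurePreserving P hs] with t ht
  rw [ht, Function.comp_apply]

lemma setIntegral_firmExcess_nonpos (hf : IsSymmConvex f) (hP : IsProxL2 f Y P) {a d h : ℝ}
    (ha : 0 < a) (hhd : h ≤ d) (hend : a + d + h ≤ 1) :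
    ∫ t in Ico a (a + h), firmExcess Y P t (t + d) ≤ 0 := by
  set s := intervalSwap a d h
  have hs := measurePreserving_intervalSwap ha hhd hend
  set G : ℝ → ℝ := fun t => (Y t - P t) * (P (s t) - P t)
  have hG : Integrable G unitMeasure :=
    ((Lp.memLp Y).sub (Lp.memLp P)).integrable_mul
      (((Lp.memLp P).comp_measurePreserving hs).sub (Lp.memLp P))
  have hsplit := integral_unitMeasure_eq_setIntegral_add_shift ha hhd hend hG fun t ht => by
    simp only [G, s, intervalSwap, if_neg fun h' => ht.2 (Or.inl h'),
      if_neg fun h' => ht.2 (Or.inr h'), sub_self, mul_zero]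
  have hpair : ∫ t in Ico a (a + h), firmExcess Y P t (t + d) =
      ∫ t in Ico a (a + h), (G t + G (t + d)) := by
    refine setIntegral_congr_fun measurableSet_Ico fun t ht => ?_
    have ht' : t + d ∉ Ico a (a + h) := fun h' => by linarith [h'.2, ht.1]
    have ht'' : t + d ∈ Ico (a + d) (a + h + d) := ⟨by linarith [ht.1], by linarith [ht.2]⟩
    simp only [G, s, intervalSwap, if_pos ht, if_neg ht', if_pos ht'', firmExcess,
      add_sub_cancel_right]
    ring
  rw [hpair, ← hsplit]
  exact hP.integral_mul_comp_sub_nonpos hf hs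

lemma ae_firmExcess_add_nonpos (hf : IsSymmConvex f) (hP : IsProxL2 f Y P) {d : ℝ} (hd : 0 < d) :
    ∀ᵐ t, t ∈ Ioo 0 1 → t + d ∈ Ioo 0 1 → firmExcess Y P t (t + d) ≤ 0 := by
  -- Lebesgue differentiation needs an integrable function on all of `ℝ`
  set g : ℝ → ℝ := fun t => firmExcess ((Ioo 0 1).indicator Y) ((Ioo 0 1).indicator P) t (t + d)
  have hg : Integrable g := by
    have hshift := fun X : L2 =>
      (memLp_indicator_Ioo X).comp_measurePreserving (measurePreserving_add_right volume d)
    have hΔP := (memLp_indicator_Ioo P).sub (hshift P)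
    refine (hΔP.integrable_mul (hΔP.sub ((memLp_indicator_Ioo Y).sub (hshift Y)))).congr
      (Eventually.of_forall fun t => ?_)
    simp only [g, firmExcess, Pi.mul_apply, Pi.sub_apply, Function.comp_apply]
    ring
  have hagree : ∀ t ∈ Ioo (0:ℝ) 1, t + d ∈ Ioo (0:ℝ) 1 → g t = firmExcess Y P t (t + d) :=
    fun t ht htd => by simp only [g, firmExcess, indicator_of_mem ht, indicator_of_mem htd]
  have hae := ae_nonpos_of_eventually_setIntegral_Icc_nonpos hg.locallyIntegrable
    (S := Ioo 0 (1 - d)) fun x hx => ?_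
  · filter_upwards [hae] with t ht ht0 ht1
    rw [← hagree t ht0 ht1]
    exact ht ⟨ht0.1, by linarith [ht1.2]⟩
  filter_upwards [Ioo_mem_nhdsGT (lt_min hx.1 (lt_min (half_pos hd) (sub_pos.2 hx.2)))]
    with r ⟨hr0, hr⟩
  simp only [lt_min_iff] at hr
  rw [integral_Icc_eq_integral_Ico, show x + r = x - r + 2 * r by ring,
    setIntegral_congr_fun measurableSet_Ico fun t ht => hagree t
      ⟨by linarith [ht.1], by linarith [ht.2]⟩ ⟨by linarith [ht.1], by linarith [ht.2]⟩]
  exact hP.setIntegral_firmExcess_nonpos hf (by linarith) (by linarith) (by linarith)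

lemma ae_firmExcess_nonpos (hf : IsSymmConvex f) (hP : IsProxL2 f Y P) :
    ∀ᵐ z ∂(unitMeasure.prod unitMeasure), firmExcess Y P z.1 z.2 ≤ 0 := by
  have hY := (Lp.stronglyMeasurable Y).measurable
  have hP' := (Lp.stronglyMeasurable P).measurable
  have hmeas : MeasurableSet {z : ℝ × ℝ | firmExcess Y P z.1 z.2 ≤ 0} :=
    measurableSet_le (by unfold firmExcess; fun_prop) measurable_const
  have hprod : unitMeasure.prod unitMeasure =
      (volume.prod volume).restrict (Ioo (0:ℝ) 1 ×ˢ Ioo (0:ℝ) 1) := Measure.prod_restrict _ _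
  rw [hprod, ae_restrict_iff' (measurableSet_Ioo.prod measurableSet_Ioo)]
  have hpmeas : MeasurableSet
      {z : ℝ × ℝ | z.1 ∈ Ioo (0:ℝ) 1 → z.2 ∈ Ioo (0:ℝ) 1 → firmExcess Y P z.1 z.2 ≤ 0} :=
    (measurable_fst measurableSet_Ioo).imp ((measurable_snd measurableSet_Ioo).imp hmeas)
  have hdiag : ∀ d, ∀ᵐ t, t ∈ Ioo 0 1 → t + d ∈ Ioo 0 1 → firmExcess Y P t (t + d) ≤ 0 := by
    intro d
    rcases lt_trichotomy d 0 with hd | rfl | hd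
    · filter_upwards [(measurePreserving_add_right volume d).quasiMeasurePreserving.ae
        (hP.ae_firmExcess_add_nonpos hf (neg_pos.2 hd))] with t ht ht0 ht1
      rw [firmExcess_comm]
      simpa using ht ht1 (by simpa using ht0)
    · exact Eventually.of_forall fun t _ _ => by simp [firmExcess]
    · exact hP.ae_firmExcess_add_nonpos hf hd
  filter_upwards [ae_prod_of_forall_ae_add
    (p := fun t u => t ∈ Ioo 0 1 → u ∈ Ioo 0 1 → firmExcess Y P t u ≤ 0) hpmeas hdiag]
    with z hz hzI
  exact hz hzI.1 hzI.2

lemma support_lawOf2 (hf : IsSymmConvex f) (hP : IsProxL2 f Y P) :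
    ∀ z ∈ (lawOf2 Y P).support, ∀ w ∈ (lawOf2 Y P).support,
      (z.2 - w.2) ^ 2 ≤ (z.1 - w.1) * (z.2 - w.2) := by
  intro z hz w hw
  by_contra! hlt
  have hV : IsOpen
      {q : (ℝ × ℝ) × (ℝ × ℝ) | (q.1.1 - q.2.1) * (q.1.2 - q.2.2) < (q.1.2 - q.2.2) ^ 2} :=
    isOpen_lt (by fun_prop) (by fun_prop)
  refine Measure.prod_ne_zero_of_mem_support hz hw hV hlt ?_
  have hφ := measurable_pair_coe Y P
  rw [lawOf2, Measure.map_prod_map _ _ hφ hφ, Measure.map_apply (hφ.prodMap hφ) hV.measurableSet]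
  refine measure_mono_null (fun q hq => ?_) (ae_iff.1 (hP.ae_firmExcess_nonpos hf))
  have hq' : (Y q.1 - Y q.2) * (P q.1 - P q.2) < (P q.1 - P q.2) ^ 2 := hq
  show ¬ firmExcess Y P q.1 q.2 ≤ 0
  rw [firmExcess, not_le]
  linarith

theorem exists_isPR1_ae_eq_comp (hf : IsSymmConvex f) (hP : IsProxL2 f Y P) :
    ∃ η, IsPR1 η ∧ (fun t => P t) =ᵐ[unitMeasure] fun t => η (Y t) := by
  obtain ⟨η, hη, hagree⟩ := exists_isPR1_eqOn (Measure.nonempty_support (NeZero.ne _))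
    (hP.support_lawOf2 hf)
  refine ⟨η, hη, ?_⟩
  filter_upwards [ae_of_ae_map (measurable_pair_coe Y P).aemeasurable
    (Measure.support_mem_ae (μ := lawOf2 Y P))] with t ht
  exact (hagree _ ht).symm

lemma toReal_add_integral_lawOf_le (hf : IsSymmConvex f) (hP : IsProxL2 f Y P) {η ζ : ℝ → ℝ}
    (hη : IsPR1 η) (hζ : IsPR1 ζ) (hPη : (fun t => P t) =ᵐ[unitMeasure] fun t => η (Y t))
    {Q : L2} (hQ : lawOf Q = (lawOf Y).map ζ) (hQtop : f Q ≠ ⊤) :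
    (f P).toReal + ∫ y, (y - η y) * (ζ y - η y) ∂lawOf Y ≤ (f Q).toReal := by
  set Z : L2 := (hζ.memLp_comp Y).toLp _
  have hZ := (hζ.memLp_comp Y).coeFn_toLp
  have hfZ : f Z = f Q := hf.symm _ _ ((lawOf_eq_map_of_ae_eq_comp hζ.measurable hZ).trans hQ.symm)
  have hint : ∫ y, (y - η y) * (ζ y - η y) ∂lawOf Y =
      ∫ t, (Y t - P t) * (Z t - P t) ∂unitMeasure := by
    have hηm := hη.measurable
    have hζm := hζ.measurable
    rw [lawOf, integral_map (Lp.stronglyMeasurable Y).measurable.aemeasurable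
      (by fun_prop : Measurable fun y => (y - η y) * (ζ y - η y)).aestronglyMeasurable]
    refine integral_congr_ae ?_
    filter_upwards [hPη, hZ] with t h₁ h₂
    rw [h₁, h₂]
  rw [hint, ← hfZ]
  exact hP.toReal_add_integral_le hf.ne_bot hf.proper hf.convex (hfZ ▸ hQtop)

theorem ae_eq_of_lawOf_eq (hf : IsSymmConvex f) {Y' P' : L2} (hP : IsProxL2 f Y P)
    (hP' : IsProxL2 f Y' P') (hlaw : lawOf Y = lawOf Y') {η η' : ℝ → ℝ} (hη : IsPR1 η)
    (hη' : IsPR1 η') (hPη : (fun t => P t) =ᵐ[unitMeasure] fun t => η (Y t))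
    (hPη' : (fun t => P' t) =ᵐ[unitMeasure] fun t => η' (Y' t)) : η =ᵐ[lawOf Y] η' := by
  have h₁ := hP.toReal_add_integral_lawOf_le hf hη hη' hPη
    (by rw [lawOf_eq_map_of_ae_eq_comp hη'.measurable hPη', hlaw]) (hP'.ne_top hf.proper)
  have h₂ := hP'.toReal_add_integral_lawOf_le hf hη' hη hPη'
    (by rw [lawOf_eq_map_of_ae_eq_comp hη.measurable hPη, hlaw]) (hP.ne_top hf.proper)
  rw [← hlaw] at h₂
  have hid := isPR1_id.memLp_lawOf Y
  have hL := hη.memLp_lawOf Y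
  have hL' := hη'.memLp_lawOf Y
  have hsq : ∫ y, (η y - η' y) ^ 2 ∂lawOf Y =
      ∫ y, (y - η y) * (η' y - η y) ∂lawOf Y + ∫ y, (y - η' y) * (η y - η' y) ∂lawOf Y := by
    have i₁ : Integrable (fun y => (y - η y) * (η' y - η y)) (lawOf Y) :=
      (hid.sub hL).integrable_mul (hL'.sub hL)
    have i₂ : Integrable (fun y => (y - η' y) * (η y - η' y)) (lawOf Y) :=
      (hid.sub hL').integrable_mul (hL.sub hL')
    rw [← integral_add i₁ i₂]
    exact integral_congr_ae (Eventually.of_forall fun y => by ring)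
  have hint : Integrable (fun y => (η y - η' y) ^ 2) (lawOf Y) := (hL.sub hL').integrable_sq
  have hzero := (integral_eq_zero_iff_of_nonneg (fun y => sq_nonneg _) hint).1
    (le_antisymm (by linarith) (integral_nonneg fun y => sq_nonneg _))
  filter_upwards [hzero] with y hy
  simpa [sub_eq_zero] using hy

end IsProxL2

open Classical in
/-- The map `𝔄` of the statement; `id` is a placeholder at laws of no `Y` with a proximal point. -/
def proxProfile (f : L2 → EReal) (ν : Measure ℝ) : ℝ → ℝ :=
  if h : ∃ η, IsPR1 η ∧ ∃ Y P : L2, IsProxL2 f Y P ∧ lawOf Y = ν ∧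
      (fun t => P t) =ᵐ[unitMeasure] fun t => η (Y t) then h.choose else id

lemma isPR1_proxProfile (f : L2 → EReal) (ν : Measure ℝ) : IsPR1 (proxProfile f ν) := by
  unfold proxProfile
  split_ifs with h
  exacts [h.choose_spec.1, isPR1_id]

theorem IsProxL2.ae_eq_proxProfile_comp {f : L2 → EReal} {Y P : L2} (hf : IsSymmConvex f)
    (hP : IsProxL2 f Y P) :
    (fun t => P t) =ᵐ[unitMeasure] fun t => proxProfile f (lawOf Y) (Y t) := by
  obtain ⟨η, hη, hPη⟩ := hP.exists_isPR1_ae_eq_comp hf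
  have hex : ∃ η, IsPR1 η ∧ ∃ Y' P' : L2, IsProxL2 f Y' P' ∧ lawOf Y' = lawOf Y ∧
      (fun t => P' t) =ᵐ[unitMeasure] fun t => η (Y' t) := ⟨η, hη, Y, P, hP, rfl, hPη⟩
  obtain ⟨hη₀, Y₀, P₀, hP₀, hlaw₀, hPη₀⟩ := hex.choose_spec
  have hprofile : proxProfile f (lawOf Y) = hex.choose := dif_pos hex
  have huniq := hP₀.ae_eq_of_lawOf_eq hf hP hlaw₀ hη₀ hη hPη₀ hPη
  rw [hlaw₀] at huniq
  filter_upwards [hPη, ae_of_ae_map (Lp.stronglyMeasurable Y).measurable.aemeasurable huniq]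
    with t h₁ h₂
  rw [hprofile, h₁, h₂]

theorem l2_prox_effective_scalar_general (f : L2 → EReal)
    (hsymm : SymmL2 f)
    (hbot : ∀ X, f X ≠ ⊥) (hproper : ∃ X, f X ≠ ⊤) (hconv : ConvexE f) :
    ∃ A : Measure ℝ → ℝ → ℝ,
      -- A takes values in PR₁ on P₂(ℝ)
      (∀ ν : Measure ℝ, MemP2 ν → IsPR1 (A ν)) ∧
      -- prox[f](Y) = A(law of Y) ∘ Y
      (∀ Y P : L2, IsProxL2 f Y P →
        (fun t => P t) =ᵐ[unitMeasure] fun t => A (lawOf Y) (Y t)) ∧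
      -- in particular, prox[f](Y) is σ(Y)-measurable
      (∀ Y P : L2, IsProxL2 f Y P →
        ∃ g : ℝ → ℝ, Measurable g ∧ (fun t => P t) =ᵐ[unitMeasure] fun t => g (Y t)) ∧
      -- and the joint law of (Y, prox[f](Y)) depends only on the law of Y
      (∀ Y Y' P P' : L2, IsProxL2 f Y P → IsProxL2 f Y' P' → lawOf Y = lawOf Y' →
        lawOf2 Y P = lawOf2 Y' P') := by
  have hf : IsSymmConvex f := ⟨hsymm, hbot, hproper, hconv⟩
  have hrepr := fun (Y P : L2) (hP : IsProxL2 f Y P) => hP.ae_eq_proxProfile_comp hf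
  have hmeas := fun ν => (isPR1_proxProfile f ν).measurable
  refine ⟨proxProfile f, fun ν _ => isPR1_proxProfile f ν, hrepr,
    fun Y P hP => ⟨_, hmeas _, hrepr Y P hP⟩, fun Y Y' P P' hP hP' hlaw => ?_⟩
  rw [lawOf2_eq_map_of_ae_eq_comp (hmeas _) (hrepr Y P hP),
    lawOf2_eq_map_of_ae_eq_comp (hmeas _) (hrepr Y' P' hP'), hlaw]

/-- Proposition: symmetric proximal operators on `L2(0,1)` admit an
effective scalar representation. -/
theorem l2_prox_effective_scalar (f : L2 → EReal)
    (hsymm : SymmL2 f) (hlsc : LowerSemicontinuous f)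
    (hbot : ∀ X, f X ≠ ⊥) (hproper : ∃ X, f X ≠ ⊤) (hconv : ConvexE f) :
    ∃ A : Measure ℝ → ℝ → ℝ,
      -- A takes values in PR₁ on P₂(ℝ)
      (∀ ν : Measure ℝ, MemP2 ν → IsPR1 (A ν)) ∧
      -- prox[f](Y) = A(law of Y) ∘ Y
      (∀ Y P : L2, IsProxL2 f Y P →
        (fun t => P t) =ᵐ[unitMeasure] fun t => A (lawOf Y) (Y t)) ∧
      -- in particular, prox[f](Y) is σ(Y)-measurable
      (∀ Y P : L2, IsProxL2 f Y P →
        ∃ g : ℝ → ℝ, Measurable g ∧ (fun t => P t) =ᵐ[unitMeasure] fun t => g (Y t)) ∧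
      -- and the joint law of (Y, prox[f](Y)) depends only on the law of Y
      (∀ Y Y' P P' : L2, IsProxL2 f Y P → IsProxL2 f Y' P' → lawOf Y = lawOf Y' →
        lawOf2 Y P = lawOf2 Y' P') :=
  l2_prox_effective_scalar_general f hsymm hbot hproper hconv

end
end

section
/- For every p ≥ 1 and every lsc, proper, symmetric, convex f_p: ℝ^p → ℝ∪{+∞}, there exists a symmetric, lower semicontinuous, proper, convex f: L2(0,1) → ℝ∪{+∞} that is an L2 embedding of f_p, i.e., f_p(x) = p·f(ι(x)) for every x ∈ ℝ^p and every embedding ι: ℝ^p → L2(0,1) of the form ι(x) = Σ_{j=1}^p x_j·1_{I_j}, where I₁,…,I_p is a Borel partition of (0,1) with each part of Lebesgue measure 1/p. -/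
open MeasureTheory ProbabilityTheory Filter
open scoped ENNReal NNReal

noncomputable section

noncomputable section

/-- A Borel partition of `(0,1)` into `p` parts, each of Lebesgue measure `1/p`. -/
def IsUnifPartition (p : ℕ) (I : Fin p → Set ℝ) : Prop :=
  (∀ j, MeasurableSet (I j)) ∧ Pairwise (Function.onFun Disjoint I) ∧
    (⋃ j, I j) = Set.Ioo (0:ℝ) 1 ∧ ∀ j, volume (I j) = 1 / (p : ℝ≥0∞)

/-- `X ∈ L2(0,1)` represents the embedding `ι(x) = Σ_j x_j · 1_{I_j}` of `x ∈ ℝ^p`. -/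
def RepresentsEmbed {p : ℕ} (I : Fin p → Set ℝ) (x : Fin p → ℝ) (X : L2) : Prop :=
  (fun t => X t) =ᵐ[unitMeasure]
    fun t => ∑ j, Set.indicator (I j) (fun _ => x j) t

/-- `f : L2(0,1) → ℝ ∪ {+∞}` is an `L2` embedding of `fp : ℝ^p → ℝ ∪ {+∞}`,
i.e. `fp x = p · f(ι x)` for every `x` and every embedding `ι` of the above form. -/
def IsL2Embedding {p : ℕ} (fp : (Fin p → ℝ) → EReal) (f : L2 → EReal) : Prop :=
  ∀ (I : Fin p → Set ℝ), IsUnifPartition p I →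
    ∀ (x : Fin p → ℝ) (X : L2), RepresentsEmbed I x X →
      fp x = (p : EReal) * f X

end

/-!
By Fenchel–Moreau, `fp` is the supremum of its affine minorants `z ↦ z ⬝ᵥ y + c`. Since `fp` is
symmetric, `y` may be permuted freely, so by the rearrangement inequality `fp x` is also the
supremum of `∑ₖ x₍ₖ₎ y₍ₖ₎ + c` over the same minorants, where `x₍ₖ₎`, `y₍ₖ₎` are the sorted
coordinates. Summation by parts writes `∑ₖ x₍ₖ₎ y₍ₖ₎` as `y₍₀₎ ∑ₖ x₍ₖ₎` plus a combination with
nonnegative weights `y₍ᵢ₊₁₎ - y₍ᵢ₎` of the upper tail sums `∑_{k > i} x₍ₖ₎`. For the step function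
`X = ι x` these are `p` times integrals of the quantile function of `X` over its top fractions,
which the Rockafellar–Uryasev formula `inf_a (a s + E (X - a)⁺)` extends to a convex, Lipschitz,
law-invariant functional on all of `L2(0,1)`. The supremum of the resulting extensions of the
minorants is the required `f`.
-/

lemma isClosed_realEpigraph {E : Type*} [TopologicalSpace E] {f : E → EReal}
    (hf : LowerSemicontinuous f) : IsClosed {q : E × ℝ | f q.1 ≤ q.2} :=
  hf.isClosed_epigraph.preimage
    (continuous_fst.prodMk (continuous_coe_real_ereal.comp continuous_snd))

section AffineMinorant

variable {E : Type*} [AddCommGroup E] [Module ℝ E] {f : E → EReal}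

lemma convex_realEpigraph (hf : ConvexE f) : Convex ℝ {q : E × ℝ | f q.1 ≤ q.2} := by
  rintro ⟨x, s⟩ (hx : f x ≤ s) ⟨z, t⟩ (hz : f z ≤ t) a b ha hb hab
  calc f (a • x + b • z) ≤ a * f x + b * f z := hf x z a b ha hb hab
    _ ≤ a * s + b * t := add_le_add (mul_le_mul_of_nonneg_left hx (EReal.coe_nonneg.2 ha))
          (mul_le_mul_of_nonneg_left hz (EReal.coe_nonneg.2 hb))
    _ = ((a • s + b • t : ℝ) : EReal) := by simp

variable [TopologicalSpace E]

def IsAffineMinorant (f : E → EReal) (l : E →L[ℝ] ℝ) (c : ℝ) : Prop :=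
  ∀ z, ((l z + c : ℝ) : EReal) ≤ f z

lemma IsAffineMinorant.sub_smul {l₀ l : E →L[ℝ] ℝ} {c₀ u T : ℝ} (h : IsAffineMinorant f l₀ c₀)
    (hT : 0 ≤ T) (hl : ∀ z, f z ≠ ⊤ → u < l z) :
    IsAffineMinorant f (l₀ - T • l) (c₀ + T * u) := by
  intro z
  by_cases hz : f z = ⊤
  · simp [hz]
  · refine le_trans ?_ (h z)
    rw [EReal.coe_le_coe_iff, sub_apply, smul_apply, smul_eq_mul]
    nlinarith [hl z hz]

lemma exists_affineMinorant_gt_of_separation (hbot : ∀ z, f z ≠ ⊥) {l : E →L[ℝ] ℝ}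
    {β u r : ℝ} {x : E} (hβ : 0 < β) (hx : l x + r * β < u)
    (hsep : ∀ z (t : ℝ), f z ≤ t → u < l z + t * β) :
    ∃ l c, IsAffineMinorant f l c ∧ r < l x + c := by
  refine ⟨-β⁻¹ • l, u / β, fun z => ?_, ?_⟩
  · by_cases hz : f z = ⊤
    · simp [hz]
    lift f z to ℝ using ⟨hz, hbot z⟩ with t ht
    have hzt := hsep z t ht.ge
    rw [EReal.coe_le_coe_iff, smul_apply, smul_eq_mul, ← sub_nonneg]
    have key : t - (-β⁻¹ * l z + u / β) = (l z + t * β - u) / β := by field_simp; ring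
    rw [key]
    exact div_nonneg (by linarith) hβ.le
  · rw [smul_apply, smul_eq_mul, ← sub_pos]
    have key : -β⁻¹ * l x + u / β - r = (u - (l x + r * β)) / β := by field_simp; ring
    rw [key]
    exact div_pos (by linarith) hβ

variable [IsTopologicalAddGroup E] [ContinuousSMul ℝ E] [LocallyConvexSpace ℝ E]

lemma exists_separation_of_lt (hlsc : LowerSemicontinuous f) (hconv : ConvexE f) {x : E} {r : ℝ}
    (hr : (r : EReal) < f x) :
    ∃ (l : E →L[ℝ] ℝ) (β u : ℝ), l x + r * β < u ∧ ∀ z (t : ℝ), f z ≤ t → u < l z + t * β := by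
  obtain ⟨φ, u, hxu, hepi⟩ := geometric_hahn_banach_point_closed (convex_realEpigraph hconv)
    (isClosed_realEpigraph hlsc) (show (x, r) ∉ {q : E × ℝ | f q.1 ≤ q.2} from hr.not_ge)
  have hφ : ∀ z t, φ (z, t) = φ.comp (.inl ℝ E ℝ) z + t * φ (0, 1) := fun z t => by
    rw [show ((z, t) : E × ℝ) = (z, 0) + t • (0, 1) by simp, map_add, map_smul]
    simp
  exact ⟨φ.comp (.inl ℝ E ℝ), φ (0, 1), u, hφ x r ▸ hxu, fun z t h => hφ z t ▸ hepi (z, t) h⟩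

lemma exists_affineMinorant (hlsc : LowerSemicontinuous f) (hbot : ∀ z, f z ≠ ⊥)
    (hproper : ∃ z, f z ≠ ⊤) (hconv : ConvexE f) : ∃ l c, IsAffineMinorant f l c := by
  obtain ⟨x, hx⟩ := hproper
  lift f x to ℝ using ⟨hx, hbot x⟩ with t ht
  obtain ⟨l, β, u, hxu, hsep⟩ := exists_separation_of_lt hlsc hconv
    (by rw [← ht]; exact_mod_cast sub_one_lt t : ((t - 1 : ℝ) : EReal) < f x)
  have hβ : 0 < β := by nlinarith [hsep x t ht.ge]
  obtain ⟨l, c, h, -⟩ := exists_affineMinorant_gt_of_separation hbot hβ hxu hsep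
  exact ⟨l, c, h⟩

lemma exists_affineMinorant_gt (hlsc : LowerSemicontinuous f) (hbot : ∀ z, f z ≠ ⊥)
    (hproper : ∃ z, f z ≠ ⊤) (hconv : ConvexE f) {x : E} {r : ℝ} (hr : (r : EReal) < f x) :
    ∃ l c, IsAffineMinorant f l c ∧ r < l x + c := by
  obtain ⟨l, β, u, hxu, hsep⟩ := exists_separation_of_lt hlsc hconv hr
  have hβ : 0 ≤ β := by
    by_contra! hβ
    obtain ⟨z, hz⟩ := hproper
    lift f z to ℝ using ⟨hz, hbot z⟩ with t ht
    have h := hsep z (max t ((u - l z) / β)) (by rw [← ht]; exact_mod_cast le_max_left _ _)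
    have := mul_le_mul_of_nonpos_right (le_max_right t ((u - l z) / β)) hβ.le
    rw [div_mul_cancel₀ _ hβ.ne] at this
    linarith
  rcases hβ.lt_or_eq with hβ | rfl
  · exact exists_affineMinorant_gt_of_separation hbot hβ hxu hsep
  -- a vertical separating hyperplane is tilted by adding a large multiple of it to a minorant
  obtain ⟨l₀, c₀, h₀⟩ := exists_affineMinorant hlsc hbot hproper hconv
  have hl : ∀ z, f z ≠ ⊤ → u < l z := fun z hz => by
    simpa using hsep z (f z).toReal (EReal.coe_toReal hz (hbot z)).ge
  have hxu : 0 < u - l x := by linarith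
  set T := max 0 ((r - (l₀ x + c₀) + 1) / (u - l x))
  refine ⟨_, _, h₀.sub_smul (T := T) (le_max_left _ _) hl, ?_⟩
  have := (div_le_iff₀ hxu).1 (le_max_right 0 ((r - (l₀ x + c₀) + 1) / (u - l x)))
  simp only [sub_apply, smul_apply, smul_eq_mul]
  linarith

end AffineMinorant

section Sorting

open Finset

variable {p : ℕ}

/-- Indexed by `ℕ`, with junk value `0` from `p` on, so that summation by parts over `range p`
applies. -/
def sortedSeq (x : Fin p → ℝ) (k : ℕ) : ℝ :=
  if h : k < p then x (Tuple.sort x ⟨k, h⟩) else 0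

@[simp]
lemma sortedSeq_fin (x : Fin p → ℝ) (k : Fin p) : sortedSeq x k = x (Tuple.sort x k) := by
  simp [sortedSeq]

lemma monotoneOn_sortedSeq (x : Fin p → ℝ) : MonotoneOn (sortedSeq x) (Set.Iio p) :=
  fun a ha b hb hab => by
    simpa [sortedSeq, ha.out, hb.out] using
      Tuple.monotone_sort x (show (⟨a, ha⟩ : Fin p) ≤ ⟨b, hb⟩ from hab)

lemma sum_range_sortedSeq (x : Fin p → ℝ) (g : ℝ → ℝ) :
    ∑ k ∈ range p, g (sortedSeq x k) = ∑ j, g (x j) := by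
  rw [← Fin.sum_univ_eq_sum_range (fun k => g (sortedSeq x k))]
  simpa using Equiv.sum_comp (Tuple.sort x) fun j => g (x j)

lemma sum_range_sortedSeq_mul (x y : Fin p → ℝ) :
    ∑ k ∈ range p, sortedSeq x k * sortedSeq y k = x ∘ Tuple.sort x ⬝ᵥ y ∘ Tuple.sort y := by
  rw [← Fin.sum_univ_eq_sum_range (fun k => sortedSeq x k * sortedSeq y k)]
  simp [dotProduct]

lemma dotProduct_le_sum_sortedSeq_mul (x y : Fin p → ℝ) :
    x ⬝ᵥ y ≤ ∑ k ∈ range p, sortedSeq x k * sortedSeq y k := by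
  have hmono : Monovary (x ∘ Tuple.sort x) (y ∘ Tuple.sort y) :=
    (Tuple.monotone_sort x).monovary (Tuple.monotone_sort y)
  rw [sum_range_sortedSeq_mul, ← comp_equiv_dotProduct_comp_equiv x y (Tuple.sort x)]
  simpa [dotProduct] using
    hmono.sum_mul_comp_perm_le_sum_mul (σ := (Tuple.sort x).trans (Tuple.sort y).symm)

lemma exists_perm_sum_sortedSeq_mul_eq (x y : Fin p → ℝ) :
    ∃ ρ : Equiv.Perm (Fin p), ∑ k ∈ range p, sortedSeq x k * sortedSeq y k = x ⬝ᵥ y ∘ ρ := by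
  refine ⟨(Tuple.sort x).symm.trans (Tuple.sort y), ?_⟩
  rw [sum_range_sortedSeq_mul, ← comp_equiv_dotProduct_comp_equiv x _ (Tuple.sort x)]
  congr 1
  ext k
  simp

end Sorting

section DotMinorant

variable {ι : Type*} [Fintype ι]

def dotMinorants (f : (ι → ℝ) → EReal) : Set ((ι → ℝ) × ℝ) :=
  {yc | ∀ z, ((z ⬝ᵥ yc.1 + yc.2 : ℝ) : EReal) ≤ f z}

lemma exists_dotProduct_eq (l : (ι → ℝ) →L[ℝ] ℝ) : ∃ y : ι → ℝ, ∀ z, l z = z ⬝ᵥ y := by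
  classical
  exact ⟨fun i => l fun j => if i = j then 1 else 0, fun z => by
    simpa [dotProduct] using l.toLinearMap.pi_apply_eq_sum_univ z⟩

variable {f : (ι → ℝ) → EReal}

lemma exists_mem_dotMinorants_gt (hlsc : LowerSemicontinuous f) (hbot : ∀ z, f z ≠ ⊥)
    (hproper : ∃ z, f z ≠ ⊤) (hconv : ConvexE f) {x : ι → ℝ} {r : ℝ} (hr : (r : EReal) < f x) :
    ∃ yc ∈ dotMinorants f, r < x ⬝ᵥ yc.1 + yc.2 := by
  obtain ⟨l, c, hlc, hx⟩ := exists_affineMinorant_gt hlsc hbot hproper hconv hr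
  obtain ⟨y, hy⟩ := exists_dotProduct_eq l
  exact ⟨(y, c), fun z => hy z ▸ hlc z, hy x ▸ hx⟩

lemma nonempty_dotMinorants (hlsc : LowerSemicontinuous f) (hbot : ∀ z, f z ≠ ⊥)
    (hproper : ∃ z, f z ≠ ⊤) (hconv : ConvexE f) : (dotMinorants f).Nonempty := by
  obtain ⟨r, -, hr⟩ := EReal.lt_iff_exists_real_btwn.1 (bot_lt_iff_ne_bot.2 (hbot 0))
  obtain ⟨yc, hyc, -⟩ := exists_mem_dotMinorants_gt hlsc hbot hproper hconv hr
  exact ⟨yc, hyc⟩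

end DotMinorant

section SymmetricPenalty

open Finset

variable {p : ℕ} {f : (Fin p → ℝ) → EReal}

lemma comp_perm_mem_dotMinorants (hsymm : SymmPi f) {y : Fin p → ℝ} {c : ℝ}
    (h : (y, c) ∈ dotMinorants f) (ρ : Equiv.Perm (Fin p)) : (y ∘ ρ, c) ∈ dotMinorants f :=
  fun z => by simpa [hsymm ρ.symm z] using h (z ∘ ρ.symm)

theorem eq_iSup_sum_sortedSeq_mul (hlsc : LowerSemicontinuous f) (hbot : ∀ z, f z ≠ ⊥)
    (hproper : ∃ z, f z ≠ ⊤) (hsymm : SymmPi f) (hconv : ConvexE f) (x : Fin p → ℝ) :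
    f x = ⨆ yc : dotMinorants f,
      ((∑ k ∈ range p, sortedSeq x k * sortedSeq yc.1.1 k + yc.1.2 : ℝ) : EReal) := by
  refine le_antisymm (le_of_forall_lt fun b hb => ?_) (iSup_le fun ⟨(y, c), hyc⟩ => ?_)
  · obtain ⟨r, hbr, hr⟩ := EReal.lt_iff_exists_real_btwn.1 hb
    obtain ⟨yc, hyc, hxr⟩ := exists_mem_dotMinorants_gt hlsc hbot hproper hconv hr
    refine hbr.trans (lt_of_lt_of_le ?_ (le_iSup _ ⟨yc, hyc⟩))
    exact EReal.coe_lt_coe_iff.2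
      (hxr.trans_le (by linarith [dotProduct_le_sum_sortedSeq_mul x yc.1]))
  · obtain ⟨ρ, hρ⟩ := exists_perm_sum_sortedSeq_mul_eq x y
    simpa only [hρ] using comp_perm_mem_dotMinorants hsymm hyc ρ x

end SymmetricPenalty

open Finset in
lemma sum_range_mul_eq_mul_sum_add_sum_Ico {R : Type*} [CommRing R] (v w : ℕ → R) (n : ℕ) :
    ∑ k ∈ range n, v k * w k = v 0 * ∑ k ∈ range n, w k +
      ∑ i ∈ range (n - 1), (v (i + 1) - v i) * ∑ k ∈ Ico (i + 1) n, w k := by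
  have hhead : ∑ i ∈ range (n - 1), (v (i + 1) - v i) * ∑ k ∈ range (i + 1), w k =
      ∑ i ∈ range (n - 1), (v (i + 1) - v i) *
        (∑ k ∈ range n, w k - ∑ k ∈ Ico (i + 1) n, w k) := sum_congr rfl fun i hi => by
    rw [← sum_range_add_sum_Ico w (by have := mem_range.1 hi; omega : i + 1 ≤ n)]
    ring
  have htel : ∑ i ∈ range (n - 1), (v (i + 1) - v i) * ∑ k ∈ range n, w k =
      (v (n - 1) - v 0) * ∑ k ∈ range n, w k := by
    rw [← sum_mul, sum_range_sub]
  have := sum_range_by_parts v w n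
  simp only [smul_eq_mul] at this
  rw [this, hhead]
  simp only [mul_sub, sum_sub_distrib]
  rw [htel]
  ring

open Finset in
lemma isLeast_range_mul_add_sum_max_sub {p m : ℕ} {W : ℕ → ℝ} (hW : MonotoneOn W (Set.Iio p))
    (hm : 1 ≤ m) (hmp : m ≤ p) :
    IsLeast (Set.range fun a : ℝ => a * m + ∑ k ∈ range p, max (W k - a) 0)
      (∑ k ∈ Ico (p - m) p, W k) := by
  have hcard : ((Ico (p - m) p).card : ℝ) = m := by
    rw [Nat.card_Ico, Nat.sub_sub_self hmp]
  have hmono : ∀ j ∈ range (p - m), ∀ k ∈ Ico (p - m) p, W j ≤ W k := fun j hj k hk => by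
    simp only [mem_range, mem_Ico] at hj hk
    exact hW (by simp; omega) (by simp; omega) (by omega)
  refine ⟨⟨W (p - m), ?_⟩, ?_⟩
  -- the minimum is attained at the threshold `W (p - m)`, the smallest of the top `m` values
  · have hlow : ∑ k ∈ range (p - m), max (W k - W (p - m)) 0 = 0 :=
      sum_eq_zero fun j hj => max_eq_right (by
        linarith [hmono j hj (p - m) (by simp; omega)])
    have hhigh : ∑ k ∈ Ico (p - m) p, max (W k - W (p - m)) 0 =
        ∑ k ∈ Ico (p - m) p, (W k - W (p - m)) :=
      sum_congr rfl fun k hk => max_eq_left (by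
        have := hW (by simp; omega) (by simp [(mem_Ico.1 hk).2]) (mem_Ico.1 hk).1
        linarith)
    simp only
    rw [← sum_range_add_sum_Ico _ (Nat.sub_le p m), hlow, hhigh, sum_sub_distrib, sum_const,
      nsmul_eq_mul, hcard]
    ring
  · rintro _ ⟨a, rfl⟩
    calc ∑ k ∈ Ico (p - m) p, W k = a * m + ∑ k ∈ Ico (p - m) p, (W k - a) := by
          rw [sum_sub_distrib, sum_const, nsmul_eq_mul, hcard]; ring
      _ ≤ a * m + ∑ k ∈ range p, max (W k - a) 0 := by
          gcongr
          calc ∑ k ∈ Ico (p - m) p, (W k - a) ≤ ∑ k ∈ Ico (p - m) p, max (W k - a) 0 :=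
                sum_le_sum fun k _ => le_max_left _ _
            _ ≤ ∑ k ∈ range p, max (W k - a) 0 :=
                sum_le_sum_of_subset_of_nonneg (fun k hk => mem_range.2 (mem_Ico.1 hk).2)
                  fun k _ _ => le_max_right _ _

lemma integral_empDist {p : ℕ} (x : Fin p → ℝ) (g : ℝ → ℝ) :
    ∫ u, g u ∂empDist x = (p : ℝ)⁻¹ * ∑ j, g (x j) := by
  simp [empDist, integral_smul_measure,
    integral_finsetSum_measure fun j _ => integrable_dirac (by simp : ‖g (x j)‖ₑ < ⊤)]

section UpperTailIntegral

variable {Ω : Type*} [MeasurableSpace Ω] {μ : Measure Ω} {X Y : Ω → ℝ} {s : ℝ}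

/-- `∫_{1-s}^1 q_X`, the integral of the quantile function of `X` over its top `s`-fraction,
written through the Rockafellar–Uryasev formula. -/
def upperTailIntegral (μ : Measure Ω) (s : ℝ) (X : Ω → ℝ) : ℝ :=
  ⨅ a : ℝ, a * s + ∫ ω, max (X ω - a) 0 ∂μ

lemma integral_comp_eq_of_map_eq {X' : Ω → ℝ} (hX : AEMeasurable X μ) (hX' : AEMeasurable X' μ)
    (h : μ.map X = μ.map X') {g : ℝ → ℝ} (hg : Continuous g) :
    ∫ ω, g (X ω) ∂μ = ∫ ω, g (X' ω) ∂μ := by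
  rw [← integral_map hX hg.aestronglyMeasurable, h, integral_map hX' hg.aestronglyMeasurable]

lemma integral_eq_of_map_eq {X' : Ω → ℝ} (hX : AEMeasurable X μ) (hX' : AEMeasurable X' μ)
    (h : μ.map X = μ.map X') : ∫ ω, X ω ∂μ = ∫ ω, X' ω ∂μ :=
  integral_comp_eq_of_map_eq hX hX' h continuous_id

lemma upperTailIntegral_eq_of_map_eq {X' : Ω → ℝ} (hX : AEMeasurable X μ)
    (hX' : AEMeasurable X' μ) (h : μ.map X = μ.map X') :
    upperTailIntegral μ s X = upperTailIntegral μ s X' := by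
  refine iInf_congr fun a => ?_
  rw [integral_comp_eq_of_map_eq hX hX' h (g := fun u => max (u - a) 0) (by fun_prop)]

lemma upperTailIntegral_congr_ae {X' : Ω → ℝ} (h : X =ᵐ[μ] X') :
    upperTailIntegral μ s X = upperTailIntegral μ s X' := by
  refine iInf_congr fun a => ?_
  rw [integral_congr_ae (h.mono fun ω hω => show max (X ω - a) 0 = max (X' ω - a) 0 by rw [hω])]

lemma integral_comp_of_map_eq_empDist {p : ℕ} {x : Fin p → ℝ} (hX : AEMeasurable X μ)
    (h : μ.map X = empDist x) {g : ℝ → ℝ} (hg : Continuous g) :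
    ∫ ω, g (X ω) ∂μ = (p : ℝ)⁻¹ * ∑ j, g (x j) := by
  rw [← integral_map hX hg.aestronglyMeasurable, h, integral_empDist]

open Finset in
lemma upperTailIntegral_of_map_eq_empDist {p m : ℕ} {x : Fin p → ℝ} (hX : AEMeasurable X μ)
    (h : μ.map X = empDist x) (hm : 1 ≤ m) (hmp : m ≤ p) :
    upperTailIntegral μ (m / p) X = (p : ℝ)⁻¹ * ∑ k ∈ Ico (p - m) p, sortedSeq x k := by
  have hp : (p : ℝ) ≠ 0 := by norm_cast; omega
  have hobj : ∀ a : ℝ, a * (m / p) + ∫ ω, max (X ω - a) 0 ∂μ =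
      (p : ℝ)⁻¹ * (a * m + ∑ k ∈ range p, max (sortedSeq x k - a) 0) := fun a => by
    rw [integral_comp_of_map_eq_empDist hX h (g := fun u => max (u - a) 0) (by fun_prop),
      sum_range_sortedSeq x fun u => max (u - a) 0]
    field_simp
  simp only [upperTailIntegral, hobj, ← Real.mul_iInf_of_nonneg (inv_nonneg.2 p.cast_nonneg)]
  rw [(isLeast_range_mul_add_sum_max_sub (monotoneOn_sortedSeq x) hm hmp).isGLB.ciInf_eq]

lemma mul_upperTailIntegral {a : ℝ} (ha : 0 ≤ a) :
    a * upperTailIntegral μ s X = ⨅ c : ℝ, a * (c * s + ∫ ω, max (X ω - c) 0 ∂μ) :=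
  Real.mul_iInf_of_nonneg ha _

variable [IsProbabilityMeasure μ]

lemma integrable_max_sub (hX : Integrable X μ) (a : ℝ) :
    Integrable (fun ω => max (X ω - a) 0) μ :=
  (hX.sub (integrable_const a)).pos_part

lemma bddBelow_range_mul_add_integral_max_sub (hX : Integrable X μ) (hs0 : 0 ≤ s) (hs1 : s ≤ 1) :
    BddBelow (Set.range fun a : ℝ => a * s + ∫ ω, max (X ω - a) 0 ∂μ) := by
  refine ⟨min (∫ ω, X ω ∂μ) 0, ?_⟩
  rintro _ ⟨a, rfl⟩
  have hpos : 0 ≤ ∫ ω, max (X ω - a) 0 ∂μ := integral_nonneg fun ω => le_max_right _ _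
  have hlin : ∫ ω, (X ω - a) ∂μ ≤ ∫ ω, max (X ω - a) 0 ∂μ :=
    integral_mono (hX.sub (integrable_const a)) (integrable_max_sub hX a) fun ω => le_max_left _ _
  rw [integral_sub hX (integrable_const a), integral_const, probReal_univ, one_smul] at hlin
  rcases le_total 0 a with ha | ha
  · exact (min_le_right _ _).trans (by nlinarith)
  · exact (min_le_left _ _).trans (by nlinarith)

lemma upperTailIntegral_le (hX : Integrable X μ) (hs0 : 0 ≤ s) (hs1 : s ≤ 1) (a : ℝ) :
    upperTailIntegral μ s X ≤ a * s + ∫ ω, max (X ω - a) 0 ∂μ :=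
  ciInf_le (bddBelow_range_mul_add_integral_max_sub hX hs0 hs1) a

lemma upperTailIntegral_le_add_integral_abs (hX : Integrable X μ) (hY : Integrable Y μ)
    (hs0 : 0 ≤ s) (hs1 : s ≤ 1) :
    upperTailIntegral μ s X ≤ upperTailIntegral μ s Y + ∫ ω, |X ω - Y ω| ∂μ := by
  have hXY : Integrable (fun ω => |X ω - Y ω|) μ := (hX.sub hY).abs
  rw [← sub_le_iff_le_add]
  refine le_ciInf fun a => ?_
  have hpt : ∀ ω, max (X ω - a) 0 ≤ max (Y ω - a) 0 + |X ω - Y ω| := fun ω =>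
    max_le (by linarith [le_max_left (Y ω - a) 0, le_abs_self (X ω - Y ω)]) (by positivity)
  have : ∫ ω, max (X ω - a) 0 ∂μ ≤ ∫ ω, (max (Y ω - a) 0 + |X ω - Y ω|) ∂μ :=
    integral_mono (integrable_max_sub hX a) ((integrable_max_sub hY a).add hXY) hpt
  rw [integral_add (integrable_max_sub hY a) hXY] at this
  linarith [upperTailIntegral_le hX hs0 hs1 a]

lemma upperTailIntegral_mul_add_mul_le (hX : Integrable X μ) (hY : Integrable Y μ)
    (hs0 : 0 ≤ s) (hs1 : s ≤ 1) {a b : ℝ} (ha : 0 ≤ a) (hb : 0 ≤ b) :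
    upperTailIntegral μ s (fun ω => a * X ω + b * Y ω) ≤
      a * upperTailIntegral μ s X + b * upperTailIntegral μ s Y := by
  have hZ : Integrable (fun ω => a * X ω + b * Y ω) μ := (hX.const_mul a).add (hY.const_mul b)
  -- thresholds combine like the variables, since the positive part is convex
  have key : ∀ c d, upperTailIntegral μ s (fun ω => a * X ω + b * Y ω) ≤
      a * (c * s + ∫ ω, max (X ω - c) 0 ∂μ) + b * (d * s + ∫ ω, max (Y ω - d) 0 ∂μ) := by
    intro c d
    have hpt : ∀ ω, max (a * X ω + b * Y ω - (a * c + b * d)) 0 ≤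
        a * max (X ω - c) 0 + b * max (Y ω - d) 0 := fun ω =>
      max_le (by nlinarith [le_max_left (X ω - c) 0, le_max_left (Y ω - d) 0])
        (by positivity)
    have : ∫ ω, max (a * X ω + b * Y ω - (a * c + b * d)) 0 ∂μ ≤
        ∫ ω, (a * max (X ω - c) 0 + b * max (Y ω - d) 0) ∂μ :=
      integral_mono (integrable_max_sub hZ _)
        (((integrable_max_sub hX c).const_mul a).add ((integrable_max_sub hY d).const_mul b)) hpt
    rw [integral_add ((integrable_max_sub hX c).const_mul a)
      ((integrable_max_sub hY d).const_mul b), integral_const_mul, integral_const_mul] at this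
    linarith [upperTailIntegral_le hZ hs0 hs1 (a * c + b * d)]
  have hstep : ∀ d, upperTailIntegral μ s (fun ω => a * X ω + b * Y ω) -
      b * (d * s + ∫ ω, max (Y ω - d) 0 ∂μ) ≤ a * upperTailIntegral μ s X := fun d => by
    rw [mul_upperTailIntegral ha]
    exact le_ciInf fun c => by linarith [key c d]
  have : upperTailIntegral μ s (fun ω => a * X ω + b * Y ω) - a * upperTailIntegral μ s X ≤
      b * upperTailIntegral μ s Y := by
    rw [mul_upperTailIntegral hb]
    exact le_ciInf fun d => by linarith [hstep d]
  linarith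

end UpperTailIntegral

section SortedPairing

open Finset

variable {Ω : Type*} [MeasurableSpace Ω] {μ : Measure Ω} {p : ℕ}

/-- Summation by parts of `∑ₖ x₍ₖ₎ y₍ₖ₎` (see `sortedPairing_of_map_eq_empDist`), with the
upper tail sums of the sorted `x` replaced by upper tail integrals of `X`. -/
def sortedPairing (μ : Measure Ω) (y : Fin p → ℝ) (X : Ω → ℝ) : ℝ :=
  sortedSeq y 0 * ∫ ω, X ω ∂μ +
    ∑ i ∈ range (p - 1), (sortedSeq y (i + 1) - sortedSeq y i) *
      upperTailIntegral μ ((p - 1 - i : ℕ) / p) X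

lemma sortedPairing_of_map_eq_empDist {X : Ω → ℝ} {x : Fin p → ℝ} (hX : AEMeasurable X μ)
    (h : μ.map X = empDist x) (y : Fin p → ℝ) :
    sortedPairing μ y X = (p : ℝ)⁻¹ * ∑ k ∈ range p, sortedSeq x k * sortedSeq y k := by
  have hmean : ∫ ω, X ω ∂μ = (p : ℝ)⁻¹ * ∑ k ∈ range p, sortedSeq x k := by
    rw [show ∑ k ∈ range p, sortedSeq x k = ∑ j, x j from sum_range_sortedSeq x id]
    exact integral_comp_of_map_eq_empDist hX h continuous_id
  have htail : ∑ i ∈ range (p - 1), (sortedSeq y (i + 1) - sortedSeq y i) *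
        upperTailIntegral μ ((p - 1 - i : ℕ) / p) X =
      (p : ℝ)⁻¹ * ∑ i ∈ range (p - 1), (sortedSeq y (i + 1) - sortedSeq y i) *
        ∑ k ∈ Ico (i + 1) p, sortedSeq x k := by
    rw [mul_sum]
    refine sum_congr rfl fun i hi => ?_
    have hi := mem_range.1 hi
    rw [upperTailIntegral_of_map_eq_empDist hX h (by omega) (by omega),
      show p - (p - 1 - i) = i + 1 by omega]
    ring
  simp_rw [mul_comm (sortedSeq x _), sum_range_mul_eq_mul_sum_add_sum_Ico (sortedSeq y)]
  rw [sortedPairing, hmean, htail]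
  ring

lemma sortedPairing_eq_of_map_eq {X X' : Ω → ℝ} (hX : AEMeasurable X μ)
    (hX' : AEMeasurable X' μ) (h : μ.map X = μ.map X') (y : Fin p → ℝ) :
    sortedPairing μ y X = sortedPairing μ y X' := by
  simp only [sortedPairing, integral_eq_of_map_eq hX hX' h, upperTailIntegral_eq_of_map_eq hX hX' h]

lemma sortedPairing_congr_ae {X X' : Ω → ℝ} (h : X =ᵐ[μ] X') (y : Fin p → ℝ) :
    sortedPairing μ y X = sortedPairing μ y X' := by
  simp only [sortedPairing, integral_congr_ae h, upperTailIntegral_congr_ae h]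

lemma sortedPairing_mul_add_mul_le [IsProbabilityMeasure μ] {X Y : Ω → ℝ} (hX : Integrable X μ)
    (hY : Integrable Y μ) (y : Fin p → ℝ) {a b : ℝ} (ha : 0 ≤ a) (hb : 0 ≤ b) :
    sortedPairing μ y (fun ω => a * X ω + b * Y ω) ≤
      a * sortedPairing μ y X + b * sortedPairing μ y Y := by
  have htail : ∑ i ∈ range (p - 1), (sortedSeq y (i + 1) - sortedSeq y i) *
        upperTailIntegral μ ((p - 1 - i : ℕ) / p) (fun ω => a * X ω + b * Y ω) ≤
      a * ∑ i ∈ range (p - 1), (sortedSeq y (i + 1) - sortedSeq y i) *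
          upperTailIntegral μ ((p - 1 - i : ℕ) / p) X +
        b * ∑ i ∈ range (p - 1), (sortedSeq y (i + 1) - sortedSeq y i) *
          upperTailIntegral μ ((p - 1 - i : ℕ) / p) Y := by
    rw [mul_sum, mul_sum, ← sum_add_distrib]
    refine sum_le_sum fun i hi => ?_
    have hi := mem_range.1 hi
    have hgap : 0 ≤ sortedSeq y (i + 1) - sortedSeq y i :=
      sub_nonneg.2 (monotoneOn_sortedSeq y (by simp; omega) (by simp; omega) (by omega))
    have hs0 : (0 : ℝ) ≤ (p - 1 - i : ℕ) / p := by positivity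
    have hs1 : ((p - 1 - i : ℕ) : ℝ) / p ≤ 1 :=
      div_le_one_of_le₀ (by norm_cast; omega) (by positivity)
    calc _ ≤ (sortedSeq y (i + 1) - sortedSeq y i) *
          (a * upperTailIntegral μ ((p - 1 - i : ℕ) / p) X +
            b * upperTailIntegral μ ((p - 1 - i : ℕ) / p) Y) :=
          mul_le_mul_of_nonneg_left (upperTailIntegral_mul_add_mul_le hX hY hs0 hs1 ha hb) hgap
      _ = _ := by ring
  simp only [sortedPairing]
  rw [integral_add (hX.const_mul a) (hY.const_mul b), integral_const_mul, integral_const_mul]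
  linarith

end SortedPairing

section LpTwo

variable {Ω : Type*} [MeasurableSpace Ω] {μ : Measure Ω}

lemma coeFn_add_smul {q : ℝ≥0∞} (X Y : Lp ℝ q μ) (a b : ℝ) :
    ⇑(a • X + b • Y) =ᵐ[μ] fun ω => a * X ω + b * Y ω := by
  filter_upwards [Lp.coeFn_add (a • X) (b • Y), Lp.coeFn_smul a X, Lp.coeFn_smul b Y]
    with ω h₁ h₂ h₃
  rw [h₁, Pi.add_apply, h₂, h₃, Pi.smul_apply, Pi.smul_apply, smul_eq_mul, smul_eq_mul]

variable [IsProbabilityMeasure μ]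

lemma integral_abs_sub_le_dist (X Y : Lp ℝ 2 μ) : ∫ ω, |X ω - Y ω| ∂μ ≤ dist X Y := by
  have hXY := Lp.aestronglyMeasurable (X - Y)
  calc ∫ ω, |X ω - Y ω| ∂μ = ∫ ω, ‖(X - Y : Lp ℝ 2 μ) ω‖ ∂μ :=
        integral_congr_ae ((Lp.coeFn_sub X Y).mono fun ω hω => by
          simp only [hω, Pi.sub_apply, Real.norm_eq_abs])
    _ = (eLpNorm (X - Y : Lp ℝ 2 μ) 1 μ).toReal := by
        rw [integral_norm_eq_lintegral_enorm hXY, eLpNorm_one_eq_lintegral_enorm]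
    _ ≤ (eLpNorm (X - Y : Lp ℝ 2 μ) 2 μ).toReal :=
        ENNReal.toReal_mono (Lp.eLpNorm_ne_top _)
          (eLpNorm_le_eLpNorm_of_exponent_le one_le_two hXY)
    _ = dist X Y := by rw [dist_eq_norm, Lp.norm_def]

lemma continuous_of_le_add_integral_abs {F : Lp ℝ 2 μ → ℝ}
    (hF : ∀ X Y : Lp ℝ 2 μ, F X ≤ F Y + ∫ ω, |X ω - Y ω| ∂μ) : Continuous F :=
  (LipschitzWith.of_le_add_mul 1 fun X Y => by
    linarith [hF X Y, integral_abs_sub_le_dist X Y, NNReal.coe_one ▸ one_mul (dist X Y)]).continuous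

lemma continuous_sortedPairing {p : ℕ} (y : Fin p → ℝ) :
    Continuous fun X : Lp ℝ 2 μ => sortedPairing μ y X := by
  have hint : ∀ X : Lp ℝ 2 μ, Integrable X μ := fun X => (Lp.memLp X).integrable one_le_two
  refine (continuous_const.mul (continuous_of_le_add_integral_abs fun X Y => ?_)).add
    (continuous_finsetSum _ fun i hi => continuous_const.mul
      (continuous_of_le_add_integral_abs fun X Y => ?_))
  · rw [← sub_le_iff_le_add', ← integral_sub (hint X) (hint Y)]
    exact integral_mono ((hint X).sub (hint Y)) ((hint X).sub (hint Y)).abs fun ω => le_abs_self _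
  · have hi := Finset.mem_range.1 hi
    exact upperTailIntegral_le_add_integral_abs (hint X) (hint Y) (by positivity)
      (div_le_one_of_le₀ (by norm_cast; omega) (by positivity))

lemma convexOn_sortedPairing {p : ℕ} (y : Fin p → ℝ) :
    ConvexOn ℝ Set.univ fun X : Lp ℝ 2 μ => sortedPairing μ y X := by
  refine ⟨convex_univ, fun X _ Y _ a b ha hb _ => ?_⟩
  simp only [smul_eq_mul]
  rw [sortedPairing_congr_ae (coeFn_add_smul X Y a b)]
  exact sortedPairing_mul_add_mul_le ((Lp.memLp X).integrable one_le_two)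
    ((Lp.memLp Y).integrable one_le_two) y ha hb

end LpTwo

lemma EReal.coe_mul_iSup {ι : Sort*} {c : ℝ} (hc : 0 < c) (g : ι → EReal) :
    (c : EReal) * ⨆ i, g i = ⨆ i, (c : EReal) * g i := by
  refine Monotone.map_iSup_of_continuousAt (f := fun z => (c : EReal) * z) ?_
    (fun a b h => mul_le_mul_of_nonneg_left h (EReal.coe_nonneg.2 hc.le))
    (EReal.coe_mul_bot_of_pos hc)
  exact (EReal.continuousAt_mul (p := ((c : EReal), _)) (.inl (by simp [hc.ne']))
    (.inl (by simp [hc.ne'])) (.inl (EReal.coe_ne_bot c)) (.inl (EReal.coe_ne_top c))).comp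
    (continuousAt_const.prodMk continuousAt_id)

lemma convexE_iSup_coe {E ι : Type*} [AddCommGroup E] [Module ℝ E] {g : ι → E → ℝ}
    (hg : ∀ i, ConvexOn ℝ Set.univ (g i)) : ConvexE fun x => ⨆ i, (g i x : EReal) := by
  intro x y a b ha hb hab
  refine iSup_le fun i => ?_
  calc (g i (a • x + b • y) : EReal) ≤ ((a * g i x + b * g i y : ℝ) : EReal) :=
        EReal.coe_le_coe_iff.2 ((hg i).2 trivial trivial ha hb hab)
    _ = (a : EReal) * g i x + (b : EReal) * g i y := by simp
    _ ≤ (a : EReal) * (⨆ j, (g j x : EReal)) + (b : EReal) * ⨆ j, (g j y : EReal) :=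
        add_le_add (mul_le_mul_of_nonneg_left (le_iSup (fun i => (g i x : EReal)) i)
            (EReal.coe_nonneg.2 ha))
          (mul_le_mul_of_nonneg_left (le_iSup (fun i => (g i y : EReal)) i) (EReal.coe_nonneg.2 hb))

section UnitInterval

variable {p : ℕ} {I : Fin p → Set ℝ}

lemma IsUnifPartition.pos (hI : IsUnifPartition p I) : 0 < p := by
  rcases Nat.eq_zero_or_pos p with rfl | hp
  · have h := hI.2.2.1
    rw [Set.iUnion_of_empty] at h
    exact absurd h.symm (Set.nonempty_Ioo.2 zero_lt_one).ne_empty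
  · exact hp

lemma IsUnifPartition.sum_indicator_eq (hI : IsUnifPartition p I) (x : Fin p → ℝ) {j : Fin p}
    {t : ℝ} (ht : t ∈ I j) : ∑ k, (I k).indicator (fun _ => x k) t = x j := by
  rw [Finset.sum_eq_single j (fun k _ hkj => Set.indicator_of_notMem
    (fun htk => (hI.2.1 hkj).ne_of_mem htk ht rfl) _) (by simp)]
  exact Set.indicator_of_mem ht _

lemma lawOf_eq_empDist (hI : IsUnifPartition p I) {x : Fin p → ℝ} {X : L2}
    (hX : RepresentsEmbed I x X) : lawOf X = empDist x := by
  have hS : Measurable fun t => ∑ j, (I j).indicator (fun _ => x j) t :=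
    Finset.measurable_sum _ fun j _ => measurable_const.indicator (hI.1 j)
  have hμ : unitMeasure = Measure.sum fun j => volume.restrict (I j) := by
    rw [unitMeasure, ← hI.2.2.1, Measure.restrict_iUnion hI.2.1 hI.1]
  have hpiece : ∀ j, (volume.restrict (I j)).map (fun t => ∑ j, (I j).indicator (fun _ => x j) t)
      = (p : ℝ≥0∞)⁻¹ • Measure.dirac (x j) := fun j => by
    rw [Measure.map_congr (g := fun _ => x j)
      ((ae_restrict_mem (hI.1 j)).mono fun t ht => hI.sum_indicator_eq x ht),
      Measure.map_const, Measure.restrict_apply_univ, hI.2.2.2 j, one_div]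
  rw [lawOf, Measure.map_congr hX, hμ, Measure.map_sum hS.aemeasurable, Measure.sum_fintype]
  simp only [hpiece, empDist, Finset.smul_sum]

lemma exists_representsEmbed (hI : ∀ j, MeasurableSet (I j)) (x : Fin p → ℝ) :
    ∃ X : L2, RepresentsEmbed I x X := by
  have hmem : MemLp (fun t => ∑ j, (I j).indicator (fun _ => x j) t) 2 unitMeasure :=
    memLp_finsetSum _ fun j _ => memLp_indicator_const 2 (hI j) (x j) (.inr (measure_ne_top _ _))
  exact ⟨hmem.toLp _, hmem.coeFn_toLp⟩

def stdPartition (p : ℕ) (j : Fin p) : Set ℝ :=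
  Set.Ioo 0 1 ∩ Set.Ico ((j : ℕ) / p) (((j : ℕ) + 1) / p)

lemma mem_stdPartition_iff (hp : 0 < p) {j : Fin p} {t : ℝ} :
    t ∈ stdPartition p j ↔ t ∈ Set.Ioo 0 1 ∧ ⌊t * p⌋₊ = j := by
  have hp' : (0 : ℝ) < p := by exact_mod_cast hp
  simp only [stdPartition, Set.mem_inter_iff, Set.mem_Ico, and_congr_right_iff]
  intro ht
  rw [Nat.floor_eq_iff (by nlinarith [ht.1]), div_le_iff₀ hp', lt_div_iff₀ hp']

lemma isUnifPartition_stdPartition (hp : 1 ≤ p) : IsUnifPartition p (stdPartition p) := by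
  have hp' : (0 : ℝ) < p := by exact_mod_cast hp
  refine ⟨fun j => measurableSet_Ioo.inter measurableSet_Ico, fun j k hjk => ?_, ?_, fun j => ?_⟩
  · refine Set.disjoint_left.2 fun t htj htk => hjk (Fin.ext ?_)
    rw [← ((mem_stdPartition_iff hp).1 htj).2, ((mem_stdPartition_iff hp).1 htk).2]
  · refine Set.Subset.antisymm (Set.iUnion_subset fun j => Set.inter_subset_left) fun t ht => ?_
    have hlt : ⌊t * p⌋₊ < p := (Nat.floor_lt (by nlinarith [ht.1])).2 (by nlinarith [ht.2])
    exact Set.mem_iUnion.2 ⟨⟨_, hlt⟩, (mem_stdPartition_iff hp).2 ⟨ht, rfl⟩⟩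
  · have hsub : Set.Ico ((j : ℕ) / p : ℝ) (((j : ℕ) + 1) / p) ⊆ Set.Icc 0 1 :=
      Set.Ico_subset_Icc_self.trans (Set.Icc_subset_Icc (by positivity)
        (div_le_one_of_le₀ (by exact_mod_cast j.2) hp'.le))
    have hvol :
        volume (stdPartition p j) = volume (Set.Ico ((j : ℕ) / p : ℝ) (((j : ℕ) + 1) / p)) :=
      (measure_congr ((Ioo_ae_eq_Icc (μ := volume)).inter (EventuallyEq.refl _ _))).trans
        (by rw [Set.inter_eq_right.2 hsub])
    rw [hvol, Real.volume_Ico, ← sub_div, add_sub_cancel_left, ENNReal.ofReal_div_of_pos hp',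
      ENNReal.ofReal_one, ENNReal.ofReal_natCast]

end UnitInterval

section L2Extension

variable {p : ℕ} {fp : (Fin p → ℝ) → EReal}

def l2Extension (fp : (Fin p → ℝ) → EReal) (X : L2) : EReal :=
  ⨆ yc : dotMinorants fp, ((sortedPairing unitMeasure yc.1.1 X + yc.1.2 / p : ℝ) : EReal)

lemma symmL2_l2Extension : SymmL2 (l2Extension fp) := fun X X' h =>
  iSup_congr fun yc => by
    rw [sortedPairing_eq_of_map_eq (Lp.aestronglyMeasurable X).aemeasurable
      (Lp.aestronglyMeasurable X').aemeasurable h]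

lemma lowerSemicontinuous_l2Extension : LowerSemicontinuous (l2Extension fp) :=
  lowerSemicontinuous_iSup fun yc => (continuous_coe_real_ereal.comp
    ((continuous_sortedPairing yc.1.1).add continuous_const)).lowerSemicontinuous

lemma l2Extension_ne_bot (hne : (dotMinorants fp).Nonempty) (X : L2) :
    l2Extension fp X ≠ ⊥ := by
  unfold l2Extension
  exact bot_lt_iff_ne_bot.1 (lt_iSup_iff.2 ⟨⟨hne.some, hne.some_mem⟩, EReal.bot_lt_coe _⟩)

lemma convexE_l2Extension : ConvexE (l2Extension fp) :=
  convexE_iSup_coe fun yc => (convexOn_sortedPairing yc.1.1).add_const _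

theorem isL2Embedding_l2Extension (hlsc : LowerSemicontinuous fp) (hbot : ∀ x, fp x ≠ ⊥)
    (hproper : ∃ x, fp x ≠ ⊤) (hsymm : SymmPi fp) (hconv : ConvexE fp) :
    IsL2Embedding fp (l2Extension fp) := by
  intro I hI x X hX
  have hp : (0 : ℝ) < p := by exact_mod_cast hI.pos
  rw [eq_iSup_sum_sortedSeq_mul hlsc hbot hproper hsymm hconv x, l2Extension,
    ← EReal.coe_coe_eq_natCast, EReal.coe_mul_iSup hp]
  refine iSup_congr fun yc => ?_
  rw [sortedPairing_of_map_eq_empDist (Lp.aestronglyMeasurable X).aemeasurable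
    (lawOf_eq_empDist hI hX), ← EReal.coe_mul]
  congr 1
  field_simp

end L2Extension

/-- Proposition: every lsc, proper, symmetric, convex penalty on `ℝ^p`
admits an `L2` embedding. -/
theorem exists_l2_embedding (p : ℕ) (hp : 1 ≤ p)
    (fp : (Fin p → ℝ) → EReal)
    (hlsc : LowerSemicontinuous fp) (hbot : ∀ x, fp x ≠ ⊥) (hproper : ∃ x, fp x ≠ ⊤)
    (hsymm : SymmPi fp) (hconv : ConvexE fp) :
    ∃ f : L2 → EReal,
      SymmL2 f ∧ LowerSemicontinuous f ∧ (∀ X, f X ≠ ⊥) ∧ (∃ X, f X ≠ ⊤) ∧ ConvexE f ∧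
      IsL2Embedding fp f := by
  have hemb := isL2Embedding_l2Extension hlsc hbot hproper hsymm hconv
  refine ⟨l2Extension fp, symmL2_l2Extension, lowerSemicontinuous_l2Extension,
    l2Extension_ne_bot (nonempty_dotMinorants hlsc hbot hproper hconv), ?_, convexE_l2Extension,
    hemb⟩
  obtain ⟨x, hx⟩ := hproper
  obtain ⟨X, hX⟩ := exists_representsEmbed (isUnifPartition_stdPartition hp).1 x
  refine ⟨X, fun htop => hx ?_⟩
  rw [hemb _ (isUnifPartition_stdPartition hp) x X hX, htop, ← EReal.coe_coe_eq_natCast,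
    EReal.coe_mul_top_of_pos (by exact_mod_cast hp)]
end
end
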